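/- arXiv:2502.07454 — 12 statements merged into one kernel-verified Lean document; each statement's English description precedes it below -/
import Mathlib

section
/- Let C be a finite set of candidates and let γ : C ∪ V → ℝ² be a 2-Euclidean embedding of an election (C,V). If a voter v ∈ V is controversial (i.e., there exist candidates a,b ∈ C such that v prefers a over b while every other voter prefers b over a), and no three voters are embedded on a common line, then γ(v) is a vertex of the convex hull of the set γ(V) of embedded voter points. -/
noncomputable section

abbrev Plane : Type := EuclideanSpace ℝ (Fin 2)

/-!
All voters other than `v` lie strictly closer to `γ b` than to `γ a`, i.e. in the open half-plane
bounded by the perpendicular bisector of `γ a` and `γ b`. That half-plane is convex, so it contains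
the convex hull of the other voters, whereas `γ v` lies strictly closer to `γ a`.
-/

open scoped RealInnerProductSpace

section InnerProductSpace

variable {E : Type*} [NormedAddCommGroup E] [InnerProductSpace ℝ E]

theorem dist_lt_dist_iff_inner_lt (a b x : E) :
    dist x b < dist x a ↔ ⟪a - b, x⟫ < (‖a‖ ^ 2 - ‖b‖ ^ 2) / 2 := by
  rw [dist_eq_norm, dist_eq_norm, ← sq_lt_sq₀ (norm_nonneg _) (norm_nonneg _),
    norm_sub_sq_real, norm_sub_sq_real, inner_sub_left, real_inner_comm a, real_inner_comm b]
  constructor <;> intro h <;> linarith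

theorem convex_setOf_dist_lt_dist (a b : E) : Convex ℝ {x : E | dist x b < dist x a} := by
  simp_rw [dist_lt_dist_iff_inner_lt a b]
  exact convex_halfSpace_lt (innerₛₗ ℝ (a - b)).isLinear _

end InnerProductSpace

theorem stmt_0_general {C V : Type*}
    (pref : V → C → C → Prop)
    (γ : C ⊕ V → Plane)
    (heuc : ∀ (v : V) (a b : C), pref v a b →
      dist (γ (Sum.inr v)) (γ (Sum.inl a)) < dist (γ (Sum.inr v)) (γ (Sum.inl b)))
    (v : V) (a b : C)
    (hv : pref v a b) (hothers : ∀ u : V, u ≠ v → pref u b a) :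
    γ (Sum.inr v) ∉ convexHull ℝ ((fun u : V => γ (Sum.inr u)) '' {u : V | u ≠ v}) := by
  intro hmem
  have hothers_closer_b : (fun u : V => γ (Sum.inr u)) '' {u : V | u ≠ v} ⊆
      {x | dist x (γ (Sum.inl b)) < dist x (γ (Sum.inl a))} := by
    rintro _ ⟨u, hu, rfl⟩
    exact heuc u b a (hothers u hu)
  have hv_closer_b := convexHull_min hothers_closer_b (convex_setOf_dist_lt_dist _ _) hmem
  exact lt_asymm (heuc v a b hv) hv_closer_b

/-- In a 2-Euclidean embedding with no three voters collinear,
a controversial voter is embedded to a vertex of the convex hull of the voter points,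
i.e., its point is not in the convex hull of the other voters' points. -/
theorem stmt_0 {C V : Type*} [Fintype C] [Fintype V]
    (pref : V → C → C → Prop) (hord : ∀ v : V, IsStrictTotalOrder C (pref v))
    (γ : C ⊕ V → Plane) (hinj : Function.Injective γ)
    (heuc : ∀ (v : V) (a b : C), pref v a b →
      dist (γ (Sum.inr v)) (γ (Sum.inl a)) < dist (γ (Sum.inr v)) (γ (Sum.inl b)))
    (hnocol : ∀ u w z : V, u ≠ w → u ≠ z → w ≠ z →
      ¬ Collinear ℝ ({γ (Sum.inr u), γ (Sum.inr w), γ (Sum.inr z)} : Set Plane))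
    (v : V) (a b : C)
    (hv : pref v a b) (hothers : ∀ u : V, u ≠ v → pref u b a) :
    γ (Sum.inr v) ∉ convexHull ℝ ((fun u : V => γ (Sum.inr u)) '' {u : V | u ≠ v}) :=
  stmt_0_general pref γ heuc v a b hv hothers
end
end

section
/- Let (C,V) be a 2-Euclidean election with a nice 2-Euclidean embedding γ (no three voters collinear, no two candidate bisectors parallel). Define the controversity graph G on the set of controversial voters, with an edge {u,v} whenever the pair {u,v} is controversial (both prefer some a over b while all other voters prefer b over a). Then the maximum degree of G is at most 2. -/
noncomputable section

open RealInnerProductSpace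

/-- Squared-distance gap is positive. -/
lemma sq_gap {p A B : Plane} (h : dist p A < dist p B) :
    0 < dist p B ^ 2 - dist p A ^ 2 := by
  nlinarith [dist_nonneg (x := p) (y := A), dist_nonneg (x := p) (y := B)]

/-- The bisector function of two points is affine. -/
lemma bis (A B : Plane) : ∃ (w : Plane) (c : ℝ),
    ∀ x : Plane, ⟪x, w⟫ + c = dist x B ^ 2 - dist x A ^ 2 := by
  refine ⟨(2:ℝ) • (A - B), ‖B‖ ^ 2 - ‖A‖ ^ 2, fun x => ?_⟩
  rw [dist_eq_norm, dist_eq_norm, norm_sub_sq_real, norm_sub_sq_real,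
    real_inner_smul_right, inner_sub_right]
  ring

lemma sep_of (x : Fin 4 → Plane) (A B : Plane) (s : Fin 4 → Bool)
    (h : ∀ i, (s i = true → dist (x i) A < dist (x i) B) ∧
      (s i = false → dist (x i) B < dist (x i) A)) :
    ∃ (w : Plane) (c : ℝ), ∀ i, (s i = true → 0 < ⟪x i, w⟫ + c) ∧
      (s i = false → ⟪x i, w⟫ + c < 0) := by
  obtain ⟨w, c, hb⟩ := bis A B
  refine ⟨w, c, fun i => ⟨fun ht => ?_, fun hf => ?_⟩⟩
  · rw [hb]; have := sq_gap ((h i).1 ht); linarith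
  · rw [hb]; have := sq_gap ((h i).2 hf); linarith

/-- Any 4 points in the plane are affinely dependent. -/
lemma affdep (x : Fin 4 → Plane) : ∃ l : Fin 4 → ℝ,
    (∃ i, l i ≠ 0) ∧ (∑ i, l i = 0) ∧ (∑ i, l i • x i = 0) := by
  have hni : ¬ LinearIndependent ℝ (fun i : Fin 3 => x i.succ - x 0) := by
    intro h
    have := h.fintype_card_le_finrank
    rw [finrank_euclideanSpace_fin] at this
    simp at this
  rw [Fintype.not_linearIndependent_iff] at hni
  obtain ⟨g, hg, i, hi⟩ := hni
  refine ⟨![-(g 0 + g 1 + g 2), g 0, g 1, g 2], ⟨i.succ, ?_⟩, ?_, ?_⟩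
  · fin_cases i <;> simpa using hi
  · rw [Fin.sum_univ_four]; simp; ring
  · rw [Fin.sum_univ_four]
    rw [Fin.sum_univ_three] at hg
    simp only [Matrix.cons_val_zero, Matrix.cons_val_one, Matrix.head_cons,
      Matrix.cons_val_two, Matrix.tail_cons, Matrix.cons_val_three]
    have h0 : (Fin.succ 0 : Fin 4) = 1 := rfl
    have h1 : (Fin.succ 1 : Fin 4) = 2 := rfl
    have h2 : (Fin.succ 2 : Fin 4) = 3 := rfl
    rw [h0, h1, h2] at hg
    linear_combination (norm := module) hg

/-- Radon-type contradiction: 4 points in the plane cannot have all sign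
patterns strictly realized by affine functions. -/
lemma keyB (x : Fin 4 → Plane)
    (h : ∀ s : Fin 4 → Bool, (∃ i, s i = true) → (∃ i, s i = false) →
      ∃ (w : Plane) (c : ℝ), ∀ i, (s i = true → 0 < ⟪x i, w⟫ + c) ∧
        (s i = false → ⟪x i, w⟫ + c < 0)) : False := by
  obtain ⟨l, ⟨i0, hi0⟩, hsum, hvec⟩ := affdep x
  have hpos : ∃ i, 0 < l i := by
    by_contra hno
    push_neg at hno
    have h0 := hno 0; have h1 := hno 1; have h2 := hno 2; have h3 := hno 3
    have : l i0 < 0 := lt_of_le_of_ne (hno i0) hi0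
    rw [Fin.sum_univ_four] at hsum
    fin_cases i0 <;> simp only [Fin.zero_eta, Fin.mk_one] at this <;> first | linarith | (simp at this; linarith)
  have hneg : ∃ i, l i < 0 := by
    by_contra hno
    push_neg at hno
    have h0 := hno 0; have h1 := hno 1; have h2 := hno 2; have h3 := hno 3
    have : 0 < l i0 := lt_of_le_of_ne (hno i0) (Ne.symm hi0)
    rw [Fin.sum_univ_four] at hsum
    fin_cases i0 <;> simp only [Fin.zero_eta, Fin.mk_one] at this <;> first | linarith | (simp at this; linarith)
  obtain ⟨ip, hip⟩ := hpos
  obtain ⟨iq, hiq⟩ := hneg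
  set s : Fin 4 → Bool := fun i => decide (0 < l i) with hs
  obtain ⟨w, c, hw⟩ := h s ⟨ip, by simp [hs, hip]⟩ ⟨iq, by simp [hs]; linarith⟩
  have hzero : ∑ i, l i * (⟪x i, w⟫ + c) = 0 := by
    have e1 : ∑ i, l i * ⟪x i, w⟫ = ⟪∑ i, l i • x i, w⟫ := by
      rw [sum_inner]
      congr 1; ext i; rw [real_inner_smul_left]
    calc ∑ i, l i * (⟪x i, w⟫ + c) = (∑ i, l i * ⟪x i, w⟫) + (∑ i, l i) * c := by
          rw [Finset.sum_mul]; rw [← Finset.sum_add_distrib]; congr 1; ext i; ring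
      _ = 0 := by rw [e1, hvec, hsum, inner_zero_left]; ring
  have hposum : 0 < ∑ i, l i * (⟪x i, w⟫ + c) := by
    apply Finset.sum_pos'
    · intro i _
      rcases le_or_gt (l i) 0 with hle | hlt
      · have hfi : ⟪x i, w⟫ + c < 0 := (hw i).2 (by simp [hs]; linarith)
        nlinarith [hle, hfi.le]
      · have hfi : 0 < ⟪x i, w⟫ + c := (hw i).1 (by simp [hs, hlt])
        positivity
    · exact ⟨ip, Finset.mem_univ _, mul_pos hip ((hw ip).1 (by simp [hs, hip]))⟩
  linarith


/-- A single voter `v` is controversial: for some candidates `a,b`, `v` prefers `a` over `b`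
while every other voter prefers `b` over `a`. -/
def Controversial1 {C V : Type*} (pref : V → C → C → Prop) (v : V) : Prop :=
  ∃ a b : C, pref v a b ∧ ∀ u : V, u ≠ v → pref u b a

/-- The pair `{u,v}` is controversial: for some candidates `a,b`, both `u` and `v`
prefer `a` over `b` while every voter outside `{u,v}` prefers `b` over `a`. -/
def Controversial2 {C V : Type*} (pref : V → C → C → Prop) (u v : V) : Prop :=
  ∃ a b : C, pref u a b ∧ pref v a b ∧ ∀ w : V, w ≠ u → w ≠ v → pref w b a

/-- if `(C,V)` has a nice 2-Euclidean embedding, then in the controversity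
graph every (controversial) voter has at most 2 neighbors. -/
theorem stmt_1 {C V : Type*} [Fintype C] [Fintype V]
    (pref : V → C → C → Prop) (hord : ∀ v : V, IsStrictTotalOrder C (pref v))
    (γ : C ⊕ V → Plane) (hinj : Function.Injective γ)
    (heuc : ∀ (v : V) (a b : C), pref v a b →
      dist (γ (Sum.inr v)) (γ (Sum.inl a)) < dist (γ (Sum.inr v)) (γ (Sum.inl b)))
    (hnocol : ∀ u w z : V, u ≠ w → u ≠ z → w ≠ z →
      ¬ Collinear ℝ ({γ (Sum.inr u), γ (Sum.inr w), γ (Sum.inr z)} : Set Plane))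
    (hnopar : ∀ a b c d : C, a ≠ b → c ≠ d → ({a, b} : Set C) ≠ ({c, d} : Set C) →
      ∀ r : ℝ, γ (Sum.inl c) - γ (Sum.inl d) ≠ r • (γ (Sum.inl a) - γ (Sum.inl b)))
    (v : V) (hv : Controversial1 pref v) :
    Set.ncard {u : V | u ≠ v ∧ Controversial1 pref u ∧ Controversial2 pref u v} ≤ 2 := by
  by_contra hcon
  push_neg at hcon
  obtain ⟨u1, hu1, u2, hu2, u3, hu3, h12, h13, h23⟩ :=
    (Set.two_lt_ncard (Set.toFinite _)).1 hcon
  obtain ⟨hu1v, hc1, hp1⟩ := hu1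
  obtain ⟨hu2v, hc2, hp2⟩ := hu2
  obtain ⟨hu3v, hc3, hp3⟩ := hu3
  set x : Fin 4 → Plane :=
    ![γ (Sum.inr v), γ (Sum.inr u1), γ (Sum.inr u2), γ (Sum.inr u3)] with hx
  apply keyB x
  intro s hst hsf
  cases hb0 : s 0 <;> cases hb1 : s 1 <;> cases hb2 : s 2 <;> cases hb3 : s 3
  -- 1: FFFF impossible
  · obtain ⟨i, hi⟩ := hst; fin_cases i <;> simp_all
  -- 2: FFFT : Controversial1 u3
  · obtain ⟨a, b, hab, hrest⟩ := hc3
    have d0 := heuc v b a (hrest v (Ne.symm hu3v))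
    have d1 := heuc u1 b a (hrest u1 h13)
    have d2 := heuc u2 b a (hrest u2 h23)
    have d3 := heuc u3 a b hab
    refine sep_of x (γ (Sum.inl a)) (γ (Sum.inl b)) s fun i => ?_
    fin_cases i <;> simp [hb0, hb1, hb2, hb3, hx, Matrix.cons_val_three] <;> assumption
  -- 3: FFTF : Controversial1 u2
  · obtain ⟨a, b, hab, hrest⟩ := hc2
    have d0 := heuc v b a (hrest v (Ne.symm hu2v))
    have d1 := heuc u1 b a (hrest u1 h12)
    have d2 := heuc u2 a b hab
    have d3 := heuc u3 b a (hrest u3 (Ne.symm h23))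
    refine sep_of x (γ (Sum.inl a)) (γ (Sum.inl b)) s fun i => ?_
    fin_cases i <;> simp [hb0, hb1, hb2, hb3, hx, Matrix.cons_val_three] <;> assumption
  -- 4: FFTT : Controversial2 u1 v, swapped
  · obtain ⟨a, b, ha1, hav, hrest⟩ := hp1
    have d0 := heuc v a b hav
    have d1 := heuc u1 a b ha1
    have d2 := heuc u2 b a (hrest u2 h12.symm hu2v)
    have d3 := heuc u3 b a (hrest u3 h13.symm hu3v)
    refine sep_of x (γ (Sum.inl b)) (γ (Sum.inl a)) s fun i => ?_
    fin_cases i <;> simp [hb0, hb1, hb2, hb3, hx, Matrix.cons_val_three] <;> assumption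
  -- 5: FTFF : Controversial1 u1
  · obtain ⟨a, b, hab, hrest⟩ := hc1
    have d0 := heuc v b a (hrest v (Ne.symm hu1v))
    have d1 := heuc u1 a b hab
    have d2 := heuc u2 b a (hrest u2 h12.symm)
    have d3 := heuc u3 b a (hrest u3 h13.symm)
    refine sep_of x (γ (Sum.inl a)) (γ (Sum.inl b)) s fun i => ?_
    fin_cases i <;> simp [hb0, hb1, hb2, hb3, hx, Matrix.cons_val_three] <;> assumption
  -- 6: FTFT : Controversial2 u2 v, swapped
  · obtain ⟨a, b, ha2, hav, hrest⟩ := hp2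
    have d0 := heuc v a b hav
    have d1 := heuc u1 b a (hrest u1 h12 hu1v)
    have d2 := heuc u2 a b ha2
    have d3 := heuc u3 b a (hrest u3 h23.symm hu3v)
    refine sep_of x (γ (Sum.inl b)) (γ (Sum.inl a)) s fun i => ?_
    fin_cases i <;> simp [hb0, hb1, hb2, hb3, hx, Matrix.cons_val_three] <;> assumption
  -- 7: FTTF : Controversial2 u3 v, swapped
  · obtain ⟨a, b, ha3, hav, hrest⟩ := hp3
    have d0 := heuc v a b hav
    have d1 := heuc u1 b a (hrest u1 h13 hu1v)
    have d2 := heuc u2 b a (hrest u2 h23 hu2v)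
    have d3 := heuc u3 a b ha3
    refine sep_of x (γ (Sum.inl b)) (γ (Sum.inl a)) s fun i => ?_
    fin_cases i <;> simp [hb0, hb1, hb2, hb3, hx, Matrix.cons_val_three] <;> assumption
  -- 8: FTTT : Controversial1 v, swapped
  · obtain ⟨a, b, hab, hrest⟩ := hv
    have d0 := heuc v a b hab
    have d1 := heuc u1 b a (hrest u1 hu1v)
    have d2 := heuc u2 b a (hrest u2 hu2v)
    have d3 := heuc u3 b a (hrest u3 hu3v)
    refine sep_of x (γ (Sum.inl b)) (γ (Sum.inl a)) s fun i => ?_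
    fin_cases i <;> simp [hb0, hb1, hb2, hb3, hx, Matrix.cons_val_three] <;> assumption
  -- 9: TFFF : Controversial1 v
  · obtain ⟨a, b, hab, hrest⟩ := hv
    have d0 := heuc v a b hab
    have d1 := heuc u1 b a (hrest u1 hu1v)
    have d2 := heuc u2 b a (hrest u2 hu2v)
    have d3 := heuc u3 b a (hrest u3 hu3v)
    refine sep_of x (γ (Sum.inl a)) (γ (Sum.inl b)) s fun i => ?_
    fin_cases i <;> simp [hb0, hb1, hb2, hb3, hx, Matrix.cons_val_three] <;> assumption
  -- 10: TFFT : Controversial2 u3 v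
  · obtain ⟨a, b, ha3, hav, hrest⟩ := hp3
    have d0 := heuc v a b hav
    have d1 := heuc u1 b a (hrest u1 h13 hu1v)
    have d2 := heuc u2 b a (hrest u2 h23 hu2v)
    have d3 := heuc u3 a b ha3
    refine sep_of x (γ (Sum.inl a)) (γ (Sum.inl b)) s fun i => ?_
    fin_cases i <;> simp [hb0, hb1, hb2, hb3, hx, Matrix.cons_val_three] <;> assumption
  -- 11: TFTF : Controversial2 u2 v
  · obtain ⟨a, b, ha2, hav, hrest⟩ := hp2
    have d0 := heuc v a b hav
    have d1 := heuc u1 b a (hrest u1 h12 hu1v)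
    have d2 := heuc u2 a b ha2
    have d3 := heuc u3 b a (hrest u3 h23.symm hu3v)
    refine sep_of x (γ (Sum.inl a)) (γ (Sum.inl b)) s fun i => ?_
    fin_cases i <;> simp [hb0, hb1, hb2, hb3, hx, Matrix.cons_val_three] <;> assumption
  -- 12: TFTT : Controversial1 u1, swapped
  · obtain ⟨a, b, hab, hrest⟩ := hc1
    have d0 := heuc v b a (hrest v (Ne.symm hu1v))
    have d1 := heuc u1 a b hab
    have d2 := heuc u2 b a (hrest u2 h12.symm)
    have d3 := heuc u3 b a (hrest u3 h13.symm)
    refine sep_of x (γ (Sum.inl b)) (γ (Sum.inl a)) s fun i => ?_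
    fin_cases i <;> simp [hb0, hb1, hb2, hb3, hx, Matrix.cons_val_three] <;> assumption
  -- 13: TTFF : Controversial2 u1 v
  · obtain ⟨a, b, ha1, hav, hrest⟩ := hp1
    have d0 := heuc v a b hav
    have d1 := heuc u1 a b ha1
    have d2 := heuc u2 b a (hrest u2 h12.symm hu2v)
    have d3 := heuc u3 b a (hrest u3 h13.symm hu3v)
    refine sep_of x (γ (Sum.inl a)) (γ (Sum.inl b)) s fun i => ?_
    fin_cases i <;> simp [hb0, hb1, hb2, hb3, hx, Matrix.cons_val_three] <;> assumption
  -- 14: TTFT : Controversial1 u2, swapped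
  · obtain ⟨a, b, hab, hrest⟩ := hc2
    have d0 := heuc v b a (hrest v (Ne.symm hu2v))
    have d1 := heuc u1 b a (hrest u1 h12)
    have d2 := heuc u2 a b hab
    have d3 := heuc u3 b a (hrest u3 (Ne.symm h23))
    refine sep_of x (γ (Sum.inl b)) (γ (Sum.inl a)) s fun i => ?_
    fin_cases i <;> simp [hb0, hb1, hb2, hb3, hx, Matrix.cons_val_three] <;> assumption
  -- 15: TTTF : Controversial1 u3, swapped
  · obtain ⟨a, b, hab, hrest⟩ := hc3
    have d0 := heuc v b a (hrest v (Ne.symm hu3v))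
    have d1 := heuc u1 b a (hrest u1 h13)
    have d2 := heuc u2 b a (hrest u2 h23)
    have d3 := heuc u3 a b hab
    refine sep_of x (γ (Sum.inl b)) (γ (Sum.inl a)) s fun i => ?_
    fin_cases i <;> simp [hb0, hb1, hb2, hb3, hx, Matrix.cons_val_three] <;> assumption
  -- 16: TTTT impossible
  · obtain ⟨i, hi⟩ := hsf; fin_cases i <;> simp_all
end
end

section
/- Let (C,V) be a 2-Euclidean election and G its controversity graph. If G contains a cycle, then G is connected. -/
/-!
The Euclidean embedding places each controversial voter, and each controversial pair, alone on
one side of the perpendicular bisector of two candidates, so it suffices to show: if some points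
of the plane are indexed by the vertices of a graph, every single point and every edge can be cut
off from the rest by a line, and the graph has a cycle, then every vertex lies on that cycle.

Suppose a vertex `z` is off the cycle. All other points lie in an open half-plane behind `z`, so
they are ordered by their direction as seen from `z`, and no two share a direction (the nearer
one would lie on a segment between `z` and the farther one and could not be cut off). Let `m` be
the cycle vertex of extreme direction and `a`, `b` its neighbours on the cycle, with `b` between
`a` and `m`. Then `b` lies inside the angle `a z m`: either in the triangle `z a m`, and `{b}`
cannot be cut off, or beyond the segment `a m`, and the edge `{a, m}` cannot be cut off from
`z` and `b`.
-/

noncomputable section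

/-- The controversity graph: vertices are the controversial voters, and there is an
edge between two distinct controversial voters `u,v` whenever `{u,v}` is controversial. -/
def controversityGraph {C V : Type*} (pref : V → C → C → Prop) :
    SimpleGraph {v : V // Controversial1 pref v} :=
  SimpleGraph.fromRel (fun u w => Controversial2 pref u.1 w.1)

open Module SimpleGraph

section Geometry

variable {ι E : Type*} [AddCommGroup E] [Module ℝ E]

def IsCutOff (p : ι → E) (s : Set ι) : Prop :=
  ∃ (φ : Dual ℝ E) (t : ℝ), (∀ i ∈ s, t < φ (p i)) ∧ ∀ i ∉ s, φ (p i) ≤ t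

lemma Module.Dual.exists_ker_inf_ker_eq_bot [FiniteDimensional ℝ E] (hE : finrank ℝ E ≤ 2)
    {φ : Dual ℝ E} (hφ : φ ≠ 0) :
    ∃ ψ : Dual ℝ E, LinearMap.ker φ ⊓ LinearMap.ker ψ = ⊥ := by
  have hker : finrank ℝ (LinearMap.ker φ) ≤ 1 := by
    have := φ.finrank_range_add_finrank_ker
    rw [Dual.range_eq_top_of_ne_zero hφ, finrank_top, finrank_self] at this
    omega
  obtain ⟨k, hk⟩ := finrank_le_one_iff.mp hker
  obtain ⟨ψ, hψ⟩ : ∃ ψ : Dual ℝ E, ∀ c : ℝ, ψ (c • (k : E)) = 0 → c • (k : E) = 0 := by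
    by_cases hk0 : (k : E) = 0
    · exact ⟨0, fun c _ => by simp [hk0]⟩
    · obtain ⟨ψ, hψ⟩ : ∃ ψ : Dual ℝ E, ψ k ≠ 0 := by
        simpa using (forall_dual_apply_eq_zero_iff ℝ (k : E)).not.mpr hk0
      exact ⟨ψ, fun c hc => by simp_all⟩
  refine ⟨ψ, (Submodule.eq_bot_iff _).mpr fun x ⟨hφx, hψx⟩ => ?_⟩
  obtain ⟨c, hc⟩ := hk ⟨x, hφx⟩
  obtain rfl : c • (k : E) = x := congrArg Subtype.val hc
  exact hψ c hψx

section Slope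

variable {φ ψ : Dual ℝ E} (hφψ : LinearMap.ker φ ⊓ LinearMap.ker ψ = ⊥)
include hφψ

lemma eq_smul_of_div_eq_div {x y : E} (hx : φ x ≠ 0) (hy : φ y ≠ 0) (h : ψ x / φ x = ψ y / φ y) :
    y = (φ y / φ x) • x := by
  rw [← sub_eq_zero]
  refine (Submodule.eq_bot_iff _).mp hφψ _ ⟨?_, ?_⟩ <;> rw [SetLike.mem_coe, LinearMap.mem_ker]
  · simp only [map_sub, map_smul, smul_eq_mul]
    field_simp
    ring
  · simp only [map_sub, map_smul, smul_eq_mul]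
    field_simp at h ⊢
    linarith

lemma exists_pos_smul_add_pos_smul {x y w : E} (hx : 0 < φ x) (hy : 0 < φ y) (hw : 0 < φ w)
    (hxw : ψ x / φ x < ψ w / φ w) (hwy : ψ w / φ w < ψ y / φ y) :
    ∃ α β : ℝ, 0 < α ∧ 0 < β ∧ w = α • x + β • y := by
  rw [div_lt_div_iff₀ hx hw] at hxw
  rw [div_lt_div_iff₀ hw hy] at hwy
  have hD : 0 < φ x * ψ y - ψ x * φ y := by nlinarith
  refine ⟨(φ w * ψ y - ψ w * φ y) / (φ x * ψ y - ψ x * φ y),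
    (φ x * ψ w - ψ x * φ w) / (φ x * ψ y - ψ x * φ y),
    div_pos (by linarith) hD, div_pos (by linarith) hD, ?_⟩
  have hD' := hD.ne'
  -- Cramer's rule in the coordinates `(φ, ψ)`
  rw [← sub_eq_zero]
  refine (Submodule.eq_bot_iff _).mp hφψ _ ⟨?_, ?_⟩ <;> rw [SetLike.mem_coe, LinearMap.mem_ker] <;>
  · rw [map_sub, map_add, map_smul, map_smul, smul_eq_mul, smul_eq_mul, div_mul_eq_mul_div,
      div_mul_eq_mul_div, ← add_div, sub_eq_zero, eq_div_iff hD']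
    ring

end Slope

section CutOff

variable {p : ι → E}

lemma IsCutOff.comp_of_injective {κ : Type*} {f : κ → ι} (hf : f.Injective) {s : Set κ}
    (h : IsCutOff p (f '' s)) : IsCutOff (p ∘ f) s :=
  let ⟨φ, t, hin, hout⟩ := h
  ⟨φ, t, fun i hi => hin (f i) (Set.mem_image_of_mem f hi),
    fun i hi => hout (f i) (by rwa [hf.mem_set_image])⟩

lemma sub_ne_smul_sub_of_isCutOff {u w z : ι} {t : ℝ} (hu : IsCutOff p {u})
    (hw : IsCutOff p {w}) (hzu : z ≠ u) (hzw : z ≠ w) (huw : u ≠ w) (ht : 0 < t) :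
    p z - p w ≠ t • (p z - p u) := by
  intro h
  rcases le_or_gt t 1 with ht1 | ht1
  · obtain ⟨φ, s, hin, hout⟩ := hw
    have hφ := congrArg φ h
    simp only [map_sub, map_smul, smul_eq_mul] at hφ
    nlinarith [hin w rfl, hout z hzw, hout u huw]
  · obtain ⟨φ, s, hin, hout⟩ := hu
    have hφ := congrArg φ h
    simp only [map_sub, map_smul, smul_eq_mul] at hφ
    nlinarith [hin u rfl, hout z hzu, hout w huw.symm]

lemma sub_ne_smul_add_smul_of_isCutOff {a b m z : ι} {α β : ℝ} (ham : IsCutOff p {a, m})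
    (hb : IsCutOff p {b}) (hza : z ≠ a) (hzm : z ≠ m) (hzb : z ≠ b) (hab : a ≠ b)
    (hmb : m ≠ b) (hα : 0 < α) (hβ : 0 < β) :
    p z - p b ≠ α • (p z - p a) + β • (p z - p m) := by
  intro h
  rcases le_or_gt 1 (α + β) with hαβ | hαβ
  · obtain ⟨φ, s, hin, hout⟩ := ham
    have hφ := congrArg φ h
    simp only [map_sub, map_add, map_smul, smul_eq_mul] at hφ
    nlinarith [hin a (by simp), hin m (by simp), hout z (by simp [hza, hzm]),
      hout b (by simp [hab.symm, hmb.symm])]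
  · obtain ⟨φ, s, hin, hout⟩ := hb
    have hφ := congrArg φ h
    simp only [map_sub, map_add, map_smul, smul_eq_mul] at hφ
    nlinarith [hin b rfl, hout z hzb, hout a hab, hout m hmb]

end CutOff

theorem SimpleGraph.Walk.IsCycle.mem_support_of_isCutOff [FiniteDimensional ℝ E]
    (hE : finrank ℝ E ≤ 2) {G : SimpleGraph ι} {p : ι → E} (hsingle : ∀ v, IsCutOff p {v})
    (hedge : ∀ u v, G.Adj u v → IsCutOff p {u, v}) {v₀ : ι} {c : G.Walk v₀ v₀}
    (hc : c.IsCycle) (z : ι) : z ∈ c.support := by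
  classical
  by_contra hz
  have hzc : ∀ u ∈ c.support, u ≠ z := fun u hu h => hz (h ▸ hu)
  obtain ⟨φ, t, hin, hout⟩ := hsingle z
  have hφpos : ∀ u ≠ z, 0 < φ (p z - p u) := fun u hu => by
    rw [map_sub]
    linarith [hin z rfl, hout u hu]
  have hφ : φ ≠ 0 := by
    rintro rfl
    simpa using hφpos v₀ (hzc _ c.start_mem_support)
  obtain ⟨ψ, hφψ⟩ := Dual.exists_ker_inf_ker_eq_bot hE hφ
  -- the direction of `p u` as seen from `p z`
  set σ : ι → ℝ := fun u => ψ (p z - p u) / φ (p z - p u)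
  have hσ : ∀ u w, u ≠ z → w ≠ z → u ≠ w → σ u ≠ σ w := fun u w hu hw huw h =>
    sub_ne_smul_sub_of_isCutOff (hsingle u) (hsingle w) hu.symm hw.symm huw
      (div_pos (hφpos w hw) (hφpos u hu))
      (eq_smul_of_div_eq_div hφψ (hφpos u hu).ne' (hφpos w hw).ne' h)
  obtain ⟨m, hm, hmax⟩ := c.support.toFinset.exists_max_image σ ⟨v₀, by simp⟩
  rw [List.mem_toFinset] at hm
  have hnbr : ∀ x, c.toSubgraph.Adj m x → G.Adj m x ∧ x ∈ c.support := fun x hx =>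
    ⟨hx.adj_sub, c.mem_verts_toSubgraph.mp hx.snd_mem⟩
  have hcone : ∀ x y, G.Adj m x → x ∈ c.support → y ∈ c.support → y ≠ x → y ≠ m →
      ¬ σ x < σ y := by
    intro x y hmx hx hy hyx hym hxy
    have hym' : σ y < σ m :=
      (hmax y (by simpa using hy)).lt_of_ne (hσ y m (hzc y hy) (hzc m hm) hym)
    obtain ⟨α, β, hα, hβ, h⟩ := exists_pos_smul_add_pos_smul hφψ (hφpos x (hzc x hx))
      (hφpos m (hzc m hm)) (hφpos y (hzc y hy)) hxy hym'
    exact sub_ne_smul_add_smul_of_isCutOff (hedge x m hmx.symm) (hsingle y) (hzc x hx).symm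
      (hzc m hm).symm (hzc y hy).symm hyx.symm hym.symm hα hβ h
  obtain ⟨a, b, hab, hnbrs⟩ := Set.ncard_eq_two.mp (hc.ncard_neighborSet_toSubgraph_eq_two hm)
  obtain ⟨hma, ha⟩ := hnbr a (by simp [← SimpleGraph.Subgraph.mem_neighborSet, hnbrs])
  obtain ⟨hmb, hb⟩ := hnbr b (by simp [← SimpleGraph.Subgraph.mem_neighborSet, hnbrs])
  rcases (hσ a b (hzc a ha) (hzc b hb) hab).lt_or_gt with hlt | hlt
  · exact hcone a b hma ha hb hab.symm hmb.ne' hlt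
  · exact hcone b a hmb hb ha hab hma.ne' hlt

lemma dist_lt_dist_iff_lt_inner {F : Type*} [NormedAddCommGroup F] [InnerProductSpace ℝ F]
    (x a b : F) : dist x a < dist x b ↔ (‖a‖ ^ 2 - ‖b‖ ^ 2) / 2 < inner ℝ (a - b) x := by
  rw [dist_eq_norm, dist_eq_norm, ← sq_lt_sq₀ (norm_nonneg _) (norm_nonneg _),
    norm_sub_sq_real, norm_sub_sq_real, inner_sub_left, real_inner_comm x a,
    real_inner_comm x b]
  constructor <;> intro h <;> linarith

lemma isCutOff_of_dist_lt {F : Type*} [NormedAddCommGroup F] [InnerProductSpace ℝ F]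
    {q : ι → F} {s : Set ι} (a b : F) (hin : ∀ i ∈ s, dist (q i) a < dist (q i) b)
    (hout : ∀ i ∉ s, dist (q i) b < dist (q i) a) : IsCutOff q s := by
  refine ⟨innerₗ F (a - b), (‖a‖ ^ 2 - ‖b‖ ^ 2) / 2, fun i hi => ?_, fun i hi => ?_⟩
  · exact (dist_lt_dist_iff_lt_inner _ _ _).mp (hin i hi)
  · have h := (dist_lt_dist_iff_lt_inner _ _ _).mp (hout i hi)
    rw [innerₗ_apply_apply, ← neg_sub, inner_neg_left]
    linarith

end Geometry

section Election

variable {C V : Type*} {pref : V → C → C → Prop} {γ : C ⊕ V → Plane}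
  (hγ : ∀ (v : V) (a b : C), pref v a b →
    dist (γ (Sum.inr v)) (γ (Sum.inl a)) < dist (γ (Sum.inr v)) (γ (Sum.inl b)))
include hγ

lemma isCutOff_singleton_of_controversial1 {v : V} (hv : Controversial1 pref v) :
    IsCutOff (fun u => γ (Sum.inr u)) {v} := by
  obtain ⟨a, b, hab, hba⟩ := hv
  refine isCutOff_of_dist_lt (γ (Sum.inl a)) (γ (Sum.inl b)) ?_ fun u hu => hγ _ _ _ (hba u hu)
  rintro u rfl
  exact hγ _ _ _ hab

lemma isCutOff_pair_of_controversial2 {u v : V} (huv : Controversial2 pref u v) :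
    IsCutOff (fun w => γ (Sum.inr w)) {u, v} := by
  obtain ⟨a, b, hu, hv, hba⟩ := huv
  refine isCutOff_of_dist_lt (γ (Sum.inl a)) (γ (Sum.inl b)) ?_ fun w hw => ?_
  · rintro w (rfl | rfl)
    exacts [hγ _ _ _ hu, hγ _ _ _ hv]
  · simp only [Set.mem_insert_iff, Set.mem_singleton_iff, not_or] at hw
    exact hγ _ _ _ (hba w hw.1 hw.2)

end Election

theorem stmt_2_general {C V : Type*}
    (pref : V → C → C → Prop)
    (heuc : ∃ γ : C ⊕ V → Plane, Function.Injective γ ∧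
      ∀ (v : V) (a b : C), pref v a b →
        dist (γ (Sum.inr v)) (γ (Sum.inl a)) < dist (γ (Sum.inr v)) (γ (Sum.inl b)))
    (hcyc : ¬ (controversityGraph pref).IsAcyclic) :
    (controversityGraph pref).Connected := by
  classical
  obtain ⟨γ, -, hγ⟩ := heuc
  obtain ⟨v₀, c, hc⟩ : ∃ v₀, ∃ c : (controversityGraph pref).Walk v₀ v₀, c.IsCycle := by
    simpa [SimpleGraph.IsAcyclic] using hcyc
  let q : V → Plane := fun v => γ (Sum.inr v)
  have hsingle (v : {v // Controversial1 pref v}) : IsCutOff (q ∘ Subtype.val) {v} := by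
    refine IsCutOff.comp_of_injective Subtype.val_injective ?_
    rw [Set.image_singleton]
    exact isCutOff_singleton_of_controversial1 hγ v.2
  have hedge (u v) (huv : (controversityGraph pref).Adj u v) :
      IsCutOff (q ∘ Subtype.val) {u, v} := by
    refine IsCutOff.comp_of_injective Subtype.val_injective ?_
    rw [Set.image_pair]
    rcases huv with ⟨-, huv | hvu⟩
    · exact isCutOff_pair_of_controversial2 hγ huv
    · exact Set.pair_comm _ _ ▸ isCutOff_pair_of_controversial2 hγ hvu
  have hall := hc.mem_support_of_isCutOff finrank_euclideanSpace_fin.le hsingle hedge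
  exact (connected_iff_exists_forall_reachable _).2 ⟨v₀, fun w => ⟨c.takeUntil w (hall w)⟩⟩

/-- if `(C,V)` is 2-Euclidean and its controversity graph contains a cycle,
then the controversity graph is connected. -/
theorem stmt_2 {C V : Type*} [Fintype C] [Fintype V]
    (pref : V → C → C → Prop) (hord : ∀ v : V, IsStrictTotalOrder C (pref v))
    (heuc : ∃ γ : C ⊕ V → Plane, Function.Injective γ ∧
      ∀ (v : V) (a b : C), pref v a b →
        dist (γ (Sum.inr v)) (γ (Sum.inl a)) < dist (γ (Sum.inr v)) (γ (Sum.inl b)))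
    (hcyc : ¬ (controversityGraph pref).IsAcyclic) :
    (controversityGraph pref).Connected :=
  stmt_2_general pref heuc hcyc
end
end

section
/- Any 2-Euclidean election admits a nice 2-Euclidean embedding, i.e., a 2-Euclidean embedding in which no three voters are embedded on a common line and no two perpendicular bisectors between distinct pairs of candidates are parallel. -/
open Set Function Module Filter Topology

theorem IsOpen.inter_iInter_nonempty_of_subset_closure {X ι : Type*} [TopologicalSpace X]
    [BaireSpace X] [Countable ι] {U : Set X} {W : ι → Set X} (hU : IsOpen U)
    (hUne : U.Nonempty) (hW : ∀ i, IsOpen (W i)) (hUW : ∀ i, U ⊆ closure (W i)) :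
    (U ∩ ⋂ i, W i).Nonempty := by
  have hD : ∀ i, Dense (W i ∪ (closure U)ᶜ) := fun i x => by
    rw [closure_union]
    by_cases hx : x ∈ closure U
    · exact Or.inl (closure_minimal (hUW i) isClosed_closure hx)
    · exact Or.inr (subset_closure hx)
  obtain ⟨x, hxU, hx⟩ := (dense_iInter_of_isOpen
    (fun i => (hW i).union isClosed_closure.isOpen_compl) hD).inter_open_nonempty U hU hUne
  exact ⟨x, hxU, mem_iInter.2 fun i =>
    (mem_iInter.1 hx i).resolve_right (not_not.2 (subset_closure hxU))⟩

theorem isOpen_setOf_injective {ι X : Type*} [Finite ι] [TopologicalSpace X] [T2Space X] :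
    IsOpen {γ : ι → X | Injective γ} := by
  simp only [injective_iff_pairwise_ne, Pairwise, onFun, ofPred_forall]
  exact isOpen_iInter_of_finite fun i => isOpen_iInter_of_finite fun j =>
    isOpen_iInter_of_finite fun _ => isOpen_ne_fun (continuous_apply i) (continuous_apply j)

theorem mem_closure_setOf_ne_zero_of_affine {E : Type*} [AddCommGroup E] [Module ℝ E]
    [TopologicalSpace E] [ContinuousAdd E] [ContinuousSMul ℝ E] {f : E → ℝ} {x v : E} {c : ℝ}
    (hc : c ≠ 0) (hf : ∀ t : ℝ, f (x + t • v) = f x + t * c) : x ∈ closure {y | f y ≠ 0} := by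
  by_cases hx : f x = 0
  · have hline : Tendsto (fun t : ℝ => x + t • v) (𝓝[≠] 0) (𝓝 x) :=
      (Continuous.tendsto' (by fun_prop) 0 x (by simp)).mono_left nhdsWithin_le_nhds
    refine mem_closure_of_tendsto hline (eventually_nhdsWithin_of_forall fun t ht => ?_)
    simp_all
  · exact subset_closure hx

namespace Orientation

variable {E : Type*} [NormedAddCommGroup E] [InnerProductSpace ℝ E] [Fact (finrank ℝ E = 2)]
  (o : Orientation ℝ E (Fin 2)) {ι : Type*}

theorem continuous_areaForm {X : Type*} [TopologicalSpace X] {f g : X → E}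
    (hf : Continuous f) (hg : Continuous g) : Continuous fun x => o.areaForm (f x) (g x) :=
  (o.areaForm'.continuous.comp hf).clm_apply hg

theorem areaForm_sub_eq_zero_of_collinear {p q r : E} (h : Collinear ℝ ({p, q, r} : Set E)) :
    o.areaForm (q - p) (r - p) = 0 := by
  obtain ⟨d, hd⟩ := (collinear_iff_of_mem (mem_insert p _)).mp h
  obtain ⟨tq, rfl⟩ := hd q (by simp)
  obtain ⟨tr, rfl⟩ := hd r (by simp)
  simp [areaForm_apply_self]

theorem areaForm_sub_ne_zero_comm {γ : ι → E} {p q r s : ι} :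
    o.areaForm (γ p - γ q) (γ r - γ s) ≠ 0 ↔ o.areaForm (γ r - γ s) (γ p - γ q) ≠ 0 := by
  rw [areaForm_swap, neg_ne_zero]

theorem areaForm_sub_ne_zero_swap {γ : ι → E} {p q r s : ι} :
    o.areaForm (γ p - γ q) (γ r - γ s) ≠ 0 ↔ o.areaForm (γ p - γ q) (γ s - γ r) ≠ 0 := by
  rw [← neg_sub (γ r), map_neg, neg_ne_zero]

theorem mem_closure_setOf_areaForm_sub_ne_zero {γ : ι → E} {p q r s : ι} (hpq : γ p ≠ γ q)
    (hrp : r ≠ p) (hrq : r ≠ q) (hrs : r ≠ s) :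
    γ ∈ closure {γ : ι → E | o.areaForm (γ p - γ q) (γ r - γ s) ≠ 0} := by
  classical
  refine mem_closure_setOf_ne_zero_of_affine (v := Pi.single r (o.rightAngleRotation (γ p - γ q)))
    (inner_self_ne_zero.2 (sub_ne_zero.2 hpq)) fun t => ?_
  simp only [Pi.add_apply, Pi.smul_apply, Pi.single_eq_same, Pi.single_eq_of_ne hrp.symm,
    Pi.single_eq_of_ne hrq.symm, Pi.single_eq_of_ne hrs.symm, smul_zero, add_zero]
  rw [add_sub_right_comm, map_add, map_smul, areaForm_rightAngleRotation_right, smul_eq_mul]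

theorem injective_subset_closure_setOf_areaForm_sub_ne_zero {p q r s : ι} (hpq : p ≠ q)
    (hrs : r ≠ s) (hne : ({p, q} : Set ι) ≠ {r, s}) :
    {γ : ι → E | Injective γ} ⊆ closure {γ | o.areaForm (γ p - γ q) (γ r - γ s) ≠ 0} := by
  intro γ hγ
  have hfree : (r ≠ p ∧ r ≠ q) ∨ (s ≠ p ∧ s ≠ q) ∨ (p ≠ r ∧ p ≠ s) ∨ (q ≠ r ∧ q ≠ s) := by
    rw [Ne, pair_eq_pair_iff] at hne
    tauto
  rcases hfree with ⟨h₁, h₂⟩ | ⟨h₁, h₂⟩ | ⟨h₁, h₂⟩ | ⟨h₁, h₂⟩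
  · exact o.mem_closure_setOf_areaForm_sub_ne_zero (hγ.ne hpq) h₁ h₂ hrs
  · simp_rw [o.areaForm_sub_ne_zero_swap (r := r)]
    exact o.mem_closure_setOf_areaForm_sub_ne_zero (hγ.ne hpq) h₁ h₂ hrs.symm
  · simp_rw [o.areaForm_sub_ne_zero_comm (p := p)]
    exact o.mem_closure_setOf_areaForm_sub_ne_zero (hγ.ne hrs) h₁ h₂ hpq
  · simp_rw [o.areaForm_sub_ne_zero_comm (p := p), o.areaForm_sub_ne_zero_swap (r := p)]
    exact o.mem_closure_setOf_areaForm_sub_ne_zero (hγ.ne hrs) h₁ h₂ hpq.symm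

def NoParallelChords (γ : ι → E) : Prop :=
  ∀ p q r s : ι, p ≠ q → r ≠ s → ({p, q} : Set ι) ≠ {r, s} →
    o.areaForm (γ p - γ q) (γ r - γ s) ≠ 0

theorem exists_noParallelChords_mem [Fintype ι] {U : Set (ι → E)} (hU : IsOpen U)
    (hUinj : U ⊆ {γ | Injective γ}) (hUne : U.Nonempty) : ∃ γ ∈ U, o.NoParallelChords γ := by
  have := FiniteDimensional.of_fact_finrank_eq_two (K := ℝ) (V := E)
  let Chords := {x : ι × ι × ι × ι // x.1 ≠ x.2.1 ∧ x.2.2.1 ≠ x.2.2.2 ∧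
    ({x.1, x.2.1} : Set ι) ≠ {x.2.2.1, x.2.2.2}}
  let W (x : Chords) : Set (ι → E) :=
    {γ | o.areaForm (γ x.1.1 - γ x.1.2.1) (γ x.1.2.2.1 - γ x.1.2.2.2) ≠ 0}
  have hWo (x : Chords) : IsOpen (W x) :=
    isOpen_ne_fun (o.continuous_areaForm (by fun_prop) (by fun_prop)) continuous_const
  have hWd (x : Chords) : U ⊆ closure (W x) :=
    hUinj.trans (o.injective_subset_closure_setOf_areaForm_sub_ne_zero x.2.1 x.2.2.1 x.2.2.2)
  obtain ⟨γ, hγU, hγ⟩ := hU.inter_iInter_nonempty_of_subset_closure hUne hWo hWd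
  exact ⟨γ, hγU, fun p q r s hpq hrs hne => mem_iInter.1 hγ ⟨(p, q, r, s), hpq, hrs, hne⟩⟩

namespace NoParallelChords

variable {o} {γ : ι → E}

theorem not_collinear (h : o.NoParallelChords γ) {i j k : ι} (hij : i ≠ j) (hik : i ≠ k)
    (hjk : j ≠ k) : ¬ Collinear ℝ ({γ i, γ j, γ k} : Set E) := fun hcol =>
  h j i k i hij.symm hik.symm (by simp [pair_eq_pair_iff, hjk, hij.symm])
    (o.areaForm_sub_eq_zero_of_collinear hcol)

theorem sub_ne_smul_sub (h : o.NoParallelChords γ) {a b c d : ι} (hab : a ≠ b) (hcd : c ≠ d)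
    (hne : ({a, b} : Set ι) ≠ {c, d}) (t : ℝ) : γ c - γ d ≠ t • (γ a - γ b) := fun heq =>
  h c d a b hcd hab hne.symm (by
    rw [heq, map_smul, LinearMap.smul_apply, areaForm_apply_self, smul_zero])

end NoParallelChords

end Orientation

theorem stmt_3_general {C V : Type*} [Fintype C] [Fintype V]
    (pref : V → C → C → Prop)
    (heuc : ∃ γ : C ⊕ V → Plane, Function.Injective γ ∧
      ∀ (v : V) (a b : C), pref v a b →
        dist (γ (Sum.inr v)) (γ (Sum.inl a)) < dist (γ (Sum.inr v)) (γ (Sum.inl b))) :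
    ∃ γ : C ⊕ V → Plane, Function.Injective γ ∧
      (∀ (v : V) (a b : C), pref v a b →
        dist (γ (Sum.inr v)) (γ (Sum.inl a)) < dist (γ (Sum.inr v)) (γ (Sum.inl b))) ∧
      (∀ u w z : V, u ≠ w → u ≠ z → w ≠ z →
        ¬ Collinear ℝ ({γ (Sum.inr u), γ (Sum.inr w), γ (Sum.inr z)} : Set Plane)) ∧
      (∀ a b c d : C, a ≠ b → c ≠ d → ({a, b} : Set C) ≠ ({c, d} : Set C) →
        ∀ r : ℝ, γ (Sum.inl c) - γ (Sum.inl d) ≠ r • (γ (Sum.inl a) - γ (Sum.inl b))) := by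
  have : Fact (finrank ℝ Plane = 2) := ⟨finrank_euclideanSpace_fin⟩
  have hpref : IsOpen {γ : C ⊕ V → Plane | ∀ (v : V) (a b : C), pref v a b →
      dist (γ (Sum.inr v)) (γ (Sum.inl a)) < dist (γ (Sum.inr v)) (γ (Sum.inl b))} := by
    simp only [ofPred_forall]
    exact isOpen_iInter_of_finite fun v => isOpen_iInter_of_finite fun a =>
      isOpen_iInter_of_finite fun b => isOpen_iInter_of_finite fun _ =>
        isOpen_lt (by fun_prop) (by fun_prop)
  obtain ⟨γ, ⟨hinj, hγpref⟩, hγ⟩ :=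
    (EuclideanSpace.basisFun (Fin 2) ℝ).toBasis.orientation.exists_noParallelChords_mem
      (isOpen_setOf_injective.inter hpref) inter_subset_left heuc
  refine ⟨γ, hinj, hγpref, fun u w z huw huz hwz => ?_, fun a b c d hab hcd hne r => ?_⟩
  · exact hγ.not_collinear (Sum.inr_injective.ne huw) (Sum.inr_injective.ne huz)
      (Sum.inr_injective.ne hwz)
  · refine hγ.sub_ne_smul_sub (Sum.inl_injective.ne hab) (Sum.inl_injective.ne hcd) ?_ r
    rwa [← image_pair, ← image_pair, (image_injective.2 Sum.inl_injective).ne_iff]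

/-- any 2-Euclidean election admits a nice 2-Euclidean embedding:
one in which no three voters are collinear and no two perpendicular bisectors between
distinct pairs of candidates are parallel. -/
theorem stmt_3 {C V : Type*} [Fintype C] [Fintype V]
    (pref : V → C → C → Prop) (hord : ∀ v : V, IsStrictTotalOrder C (pref v))
    (heuc : ∃ γ : C ⊕ V → Plane, Function.Injective γ ∧
      ∀ (v : V) (a b : C), pref v a b →
        dist (γ (Sum.inr v)) (γ (Sum.inl a)) < dist (γ (Sum.inr v)) (γ (Sum.inl b))) :
    ∃ γ : C ⊕ V → Plane, Function.Injective γ ∧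
      (∀ (v : V) (a b : C), pref v a b →
        dist (γ (Sum.inr v)) (γ (Sum.inl a)) < dist (γ (Sum.inr v)) (γ (Sum.inl b))) ∧
      (∀ u w z : V, u ≠ w → u ≠ z → w ≠ z →
        ¬ Collinear ℝ ({γ (Sum.inr u), γ (Sum.inr w), γ (Sum.inr z)} : Set Plane)) ∧
      (∀ a b c d : C, a ≠ b → c ≠ d → ({a, b} : Set C) ≠ ({c, d} : Set C) →
        ∀ r : ℝ, γ (Sum.inl c) - γ (Sum.inl d) ≠ r • (γ (Sum.inl a) - γ (Sum.inl b))) :=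
  stmt_3_general pref heuc
end

section
/- For any positive integer k and any election (C,V), the k-block decomposition of (C,V) containing the maximum number of blocks is unique. -/
/-!
If `[a, m]` and `[c, m]` are blocks with `a < c`, then so is `[a, c - 1]`: since the candidates
placed in `[c, m]` are the same in every vote, the candidates placed in `[a, c - 1]` are exactly
those of `[a, m]` minus those of `[c, m]`. Hence the last block of a decomposition with the
maximum number of blocks cannot be split, so two maximum decompositions share their last block
`[a, m]`; what precedes it is a maximum decomposition of the positions before `a`, and induction
on the decomposition finishes the argument.
-/

noncomputable section

/-- The interval of positions `[i,j]` (0-indexed) is a block in the election whose votes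
are the rankings `vote v : C ≃ Fin |C|` (position `0` is the most preferred):
the set of candidates occupying a position in `[i,j]` in some vote has exactly
`j - i + 1` elements (hence it is the same set of candidates in every vote). -/
def IsBlock {C V : Type*} [Fintype C] (vote : V → C ≃ Fin (Fintype.card C))
    (i j : ℕ) : Prop :=
  i ≤ j ∧ j < Fintype.card C ∧
    Set.ncard {c : C | ∃ v : V, (vote v c : ℕ) ∈ Set.Icc i j} = j - i + 1

/-- A `k`-block decomposition: a nonempty sequence of blocks, each of size at most `k`,
which are consecutive, and whose last block is a tail block (ends at the last position). -/
def IsKBlockDecomp {C V : Type*} [Fintype C] (vote : V → C ≃ Fin (Fintype.card C))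
    (k : ℕ) (L : List (ℕ × ℕ)) : Prop :=
  L ≠ [] ∧
  (∀ p ∈ L, IsBlock vote p.1 p.2 ∧ p.2 + 1 - p.1 ≤ k) ∧
  List.Chain' (fun p q => p.2 + 1 = q.1) L ∧
  (∀ p, L.getLast? = some p → p.2 + 1 = Fintype.card C)

section

variable {C V : Type*} [Fintype C] {vote : V → C ≃ Fin (Fintype.card C)}

lemma ncard_setOf_vote_mem_Icc (vote : V → C ≃ Fin (Fintype.card C)) (v : V) {i j : ℕ}
    (hj : j < Fintype.card C) :
    {c : C | (vote v c : ℕ) ∈ Set.Icc i j}.ncard = j + 1 - i := by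
  have hrange : Set.Icc i j ⊆ Set.range (Fin.val : Fin (Fintype.card C) → ℕ) :=
    fun x hx => ⟨⟨x, hx.2.trans_lt hj⟩, rfl⟩
  change ((vote v) ⁻¹' (Fin.val ⁻¹' Set.Icc i j)).ncard = _
  rw [Set.ncard_preimage_of_injective_subset_range (vote v).injective (by simp),
    Set.ncard_preimage_of_injective_subset_range Fin.val_injective hrange,
    ← Finset.coe_Icc, Set.ncard_coe_finset, Nat.card_Icc]

namespace IsBlock

lemma vote_mem_Icc {i j : ℕ} (h : IsBlock vote i j) {x : C} {v : V}
    (hv : (vote v x : ℕ) ∈ Set.Icc i j) (w : V) : (vote w x : ℕ) ∈ Set.Icc i j := by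
  obtain ⟨hij, hj, hcard⟩ := h
  have hw : {c : C | (vote w c : ℕ) ∈ Set.Icc i j} = {c | ∃ u, (vote u c : ℕ) ∈ Set.Icc i j} :=
    Set.eq_of_subset_of_ncard_le (fun c hc => ⟨w, hc⟩)
      (by rw [hcard, ncard_setOf_vote_mem_Icc vote w hj]; omega)
  exact hw.ge ⟨v, hv⟩

lemma prefix_of_suffix {a c m : ℕ} (ham : IsBlock vote a m) (hcm : IsBlock vote c m)
    (hac : a < c) : IsBlock vote a (c - 1) := by
  have hcm_le : c ≤ m := hcm.1
  have hsdiff : {x : C | ∃ w, (vote w x : ℕ) ∈ Set.Icc a (c - 1)}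
      = {x : C | ∃ w, (vote w x : ℕ) ∈ Set.Icc a m}
        \ {x : C | ∃ w, (vote w x : ℕ) ∈ Set.Icc c m} := by
    ext x
    simp only [Set.mem_ofPred_eq, Set.mem_sdiff, Set.mem_Icc, not_exists]
    constructor
    · rintro ⟨w, hw⟩
      refine ⟨⟨w, ⟨hw.1, by omega⟩⟩, fun u hu => ?_⟩
      have := hcm.vote_mem_Icc (Set.mem_Icc.2 hu) w
      simp only [Set.mem_Icc] at this
      omega
    · rintro ⟨⟨u, hu⟩, hnot⟩
      exact ⟨u, hu.1, by have := hnot u; omega⟩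
  have hsub : {x : C | ∃ w, (vote w x : ℕ) ∈ Set.Icc c m}
      ⊆ {x : C | ∃ w, (vote w x : ℕ) ∈ Set.Icc a m} :=
    fun x ⟨w, hw⟩ => ⟨w, hw.1.trans' hac.le, hw.2⟩
  refine ⟨by omega, by have := ham.2.1; omega, ?_⟩
  rw [hsdiff, Set.ncard_sdiff hsub, ham.2.2, hcm.2.2]
  omega

end IsBlock

/-- Here `e` is one past the last position of the last block. Empty chains are allowed, so that
dropping the last block always leaves a chain, ending where that block starts. -/
def IsKBlockChainTo (vote : V → C ≃ Fin (Fintype.card C)) (k e : ℕ) (L : List (ℕ × ℕ)) :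
    Prop :=
  (∀ p ∈ L, IsBlock vote p.1 p.2 ∧ p.2 + 1 - p.1 ≤ k) ∧
  L.IsChain (fun p q => p.2 + 1 = q.1) ∧
  (∀ p, L.getLast? = some p → p.2 + 1 = e)

variable {k e : ℕ}

lemma isKBlockDecomp_iff {L : List (ℕ × ℕ)} :
    IsKBlockDecomp vote k L ↔ L ≠ [] ∧ IsKBlockChainTo vote k (Fintype.card C) L :=
  Iff.rfl

lemma isKBlockChainTo_append_singleton_iff {T : List (ℕ × ℕ)} {a b : ℕ} :
    IsKBlockChainTo vote k e (T ++ [(a, b)]) ↔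
      IsKBlockChainTo vote k a T ∧ IsBlock vote a b ∧ b + 1 - a ≤ k ∧ b + 1 = e := by
  simp only [IsKBlockChainTo, List.forall_mem_append, List.forall_mem_singleton,
    List.isChain_append, List.isChain_singleton, List.head?_singleton,
    List.getLast?_append, List.getLast?_singleton, Option.some_or, Option.some_inj,
    Option.mem_def, forall_eq', true_and]
  tauto

namespace IsKBlockChainTo

lemma split_last {T : List (ℕ × ℕ)} {a c m : ℕ} (h : IsKBlockChainTo vote k e (T ++ [(a, m)]))
    (hcm : IsBlock vote c m) (hac : a < c) :
    IsKBlockChainTo vote k e (T ++ [(a, c - 1), (c, m)]) := by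
  obtain ⟨hT, ham, hsize, hm⟩ := isKBlockChainTo_append_singleton_iff.1 h
  have hcm_le : c ≤ m := hcm.1
  rw [← List.singleton_append, ← List.append_assoc, isKBlockChainTo_append_singleton_iff,
    isKBlockChainTo_append_singleton_iff]
  exact ⟨⟨hT, ham.prefix_of_suffix hcm hac, by omega, by omega⟩, hcm, by omega, hm⟩

lemma le_of_maximal {T₁ T₂ : List (ℕ × ℕ)} {a c m : ℕ}
    (h₁ : IsKBlockChainTo vote k e (T₁ ++ [(a, m)]))
    (hmax₁ : ∀ L, IsKBlockChainTo vote k e L → L.length ≤ (T₁ ++ [(a, m)]).length)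
    (h₂ : IsKBlockChainTo vote k e (T₂ ++ [(c, m)])) : c ≤ a := by
  by_contra! hac
  have hcm := (isKBlockChainTo_append_singleton_iff.1 h₂).2.1
  have := hmax₁ _ (h₁.split_last hcm hac)
  simp at this

lemma maximal_prefix {T : List (ℕ × ℕ)} {a b : ℕ}
    (h : IsKBlockChainTo vote k e (T ++ [(a, b)]))
    (hmax : ∀ L, IsKBlockChainTo vote k e L → L.length ≤ (T ++ [(a, b)]).length) :
    ∀ L, IsKBlockChainTo vote k a L → L.length ≤ T.length := by
  obtain ⟨-, hab, hsize, hb⟩ := isKBlockChainTo_append_singleton_iff.1 h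
  intro L hL
  have := hmax _ (isKBlockChainTo_append_singleton_iff.2 ⟨hL, hab, hsize, hb⟩)
  simpa using this

theorem eq_of_maximal {L₁ L₂ : List (ℕ × ℕ)} (h₁ : IsKBlockChainTo vote k e L₁)
    (h₂ : IsKBlockChainTo vote k e L₂)
    (hmax₁ : ∀ L, IsKBlockChainTo vote k e L → L.length ≤ L₁.length)
    (hmax₂ : ∀ L, IsKBlockChainTo vote k e L → L.length ≤ L₂.length) : L₁ = L₂ := by
  induction L₁ using List.reverseRecOn generalizing e L₂ with
  | nil => exact (List.length_eq_zero_iff.1 (Nat.le_zero.1 (hmax₁ _ h₂))).symm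
  | append_singleton T₁ p ih =>
    obtain ⟨a, b⟩ := p
    rcases L₂.eq_nil_or_concat with rfl | ⟨T₂, ⟨c, d⟩, rfl⟩
    · simpa using hmax₂ _ h₁
    rw [List.concat_eq_append] at h₂ hmax₂ ⊢
    obtain rfl : d = b := by
      have := (isKBlockChainTo_append_singleton_iff.1 h₁).2.2.2
      have := (isKBlockChainTo_append_singleton_iff.1 h₂).2.2.2
      omega
    obtain rfl : c = a := le_antisymm (h₁.le_of_maximal hmax₁ h₂) (h₂.le_of_maximal hmax₂ h₁)
    rw [ih (isKBlockChainTo_append_singleton_iff.1 h₁).1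
      (isKBlockChainTo_append_singleton_iff.1 h₂).1 (h₁.maximal_prefix hmax₁)
      (h₂.maximal_prefix hmax₂)]

end IsKBlockChainTo

lemma forall_length_le_of_isKBlockDecomp {L₀ : List (ℕ × ℕ)}
    (hmax : ∀ L, IsKBlockDecomp vote k L → L.length ≤ L₀.length) :
    ∀ L, IsKBlockChainTo vote k (Fintype.card C) L → L.length ≤ L₀.length := by
  intro L hL
  rcases eq_or_ne L [] with rfl | hne
  · exact Nat.zero_le _
  · exact hmax L ⟨hne, hL⟩

end

theorem stmt_5_general {C V : Type*} [Fintype C] (vote : V → C ≃ Fin (Fintype.card C))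
    (k : ℕ) (L₁ L₂ : List (ℕ × ℕ))
    (h₁ : IsKBlockDecomp vote k L₁) (h₂ : IsKBlockDecomp vote k L₂)
    (hmax₁ : ∀ L, IsKBlockDecomp vote k L → L.length ≤ L₁.length)
    (hmax₂ : ∀ L, IsKBlockDecomp vote k L → L.length ≤ L₂.length) :
    L₁ = L₂ :=
  (isKBlockDecomp_iff.1 h₁).2.eq_of_maximal (isKBlockDecomp_iff.1 h₂).2
    (forall_length_le_of_isKBlockDecomp hmax₁) (forall_length_le_of_isKBlockDecomp hmax₂)

/-- for any positive integer `k` and any election, the `k`-block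
decomposition containing the maximum number of blocks is unique. -/
theorem stmt_5 {C V : Type*} [Fintype C] (vote : V → C ≃ Fin (Fintype.card C))
    (k : ℕ) (hk : 0 < k) (L₁ L₂ : List (ℕ × ℕ))
    (h₁ : IsKBlockDecomp vote k L₁) (h₂ : IsKBlockDecomp vote k L₂)
    (hmax₁ : ∀ L, IsKBlockDecomp vote k L → L.length ≤ L₁.length)
    (hmax₂ : ∀ L, IsKBlockDecomp vote k L → L.length ≤ L₂.length) :
    L₁ = L₂ :=
  stmt_5_general vote k L₁ L₂ h₁ h₂ hmax₁ hmax₂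
end
end

section
/- Let (C,V) be an election. Suppose there exist candidates b,c ∈ C such that (1) every voter prefers b over c, (2) no voter ranks any candidate strictly between b and c, and (3) some candidate a satisfies a ≻_v b for every vote v. Then (C,V) is 2-Euclidean if and only if the subelection induced by C \ {b} is 2-Euclidean. -/
/-!
Deleting a candidate only restricts an embedding, so one direction is trivial. Conversely,
given an embedding of the election without `b`, place `b` on the segment from `c` to `a`, very
close to `c`. Every voter prefers `a` to `c`, so by convexity of the distance every voter is
strictly closer to the new point than to `c`, and hence than to every candidate ranked below `b`
(these are `c` and the candidates below `c`). Being close to `c`, the new point stays strictly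
farther than every candidate ranked above `b`, since those are ranked above `c` as well.
Only finitely many points have to be avoided, so a suitable position exists.
-/

noncomputable section

def IsEuclidean2 {C V : Type*} (pref : V → C → C → Prop) : Prop :=
  ∃ γ : C ⊕ V → Plane, Function.Injective γ ∧
    ∀ (v : V) (a b : C), pref v a b →
      dist (γ (Sum.inr v)) (γ (Sum.inl a)) < dist (γ (Sum.inr v)) (γ (Sum.inl b))

open Filter Topology Function

theorem IsEuclidean2.comap {C C' V : Type*} {pref : V → C → C → Prop} (h : IsEuclidean2 pref)
    {f : C' → C} (hf : Injective f) : IsEuclidean2 fun v x y => pref v (f x) (f y) := by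
  obtain ⟨γ, hγ, hpref⟩ := h
  exact ⟨γ ∘ Sum.map f id, hγ.comp (hf.sumMap injective_id), fun v x y hxy => hpref v _ _ hxy⟩

/-- `p` is a fresh position for the candidate `b` deleted from the embedding `γ`, at which every
voter ranks `b` correctly. -/
def IsPlacement {C V : Type*} (pref : V → C → C → Prop) {b : C}
    (γ : {d : C // d ≠ b} ⊕ V → Plane) (p : Plane) : Prop :=
  p ∉ Set.range γ ∧
    (∀ v (x : {d : C // d ≠ b}), pref v x b →
      dist (γ (.inr v)) (γ (.inl x)) < dist (γ (.inr v)) p) ∧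
    (∀ v (y : {d : C // d ≠ b}), pref v b y →
      dist (γ (.inr v)) p < dist (γ (.inr v)) (γ (.inl y)))

theorem IsPlacement.isEuclidean2 {C V : Type*} {pref : V → C → C → Prop} {b : C}
    (hirrefl : ∀ v, ¬ pref v b b) {γ : {d : C // d ≠ b} ⊕ V → Plane} (hγ : Injective γ)
    (hpref : ∀ v (x y : {d : C // d ≠ b}), pref v x y →
      dist (γ (.inr v)) (γ (.inl x)) < dist (γ (.inr v)) (γ (.inl y)))
    {p : Plane} (hplace : IsPlacement pref γ p) : IsEuclidean2 pref := by
  obtain ⟨hp, hbelow, habove⟩ := hplace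
  classical
  have hp' : ∀ q, γ q ≠ p := fun q hq => hp ⟨q, hq⟩
  let γC : C → Plane := fun d => if h : d = b then p else γ (.inl ⟨d, h⟩)
  have hγC : Injective γC :=
    Injective.dite (f := fun _ => p) _ (fun _ _ _ => Subsingleton.elim _ _)
      (hγ.comp Sum.inl_injective) fun h => hp' _ h.symm
  have hdisj : ∀ d v, γC d ≠ γ (.inr v) := by
    intro d v
    by_cases hd : d = b
    · simpa [γC, hd] using (hp' _).symm
    · simpa [γC, hd] using hγ.ne Sum.inl_ne_inr
  refine ⟨Sum.elim γC (γ ∘ .inr), hγC.sumElim (hγ.comp Sum.inr_injective) hdisj, ?_⟩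
  intro v x y hxy
  simp only [Sum.elim_inl, Sum.elim_inr, comp_apply, γC]
  split_ifs with hx hy hy
  · subst hx hy; exact absurd hxy (hirrefl v)
  · subst hx; exact habove v ⟨y, hy⟩ hxy
  · subst hy; exact hbelow v ⟨x, hx⟩ hxy
  · exact hpref v ⟨x, hx⟩ ⟨y, hy⟩ hxy

section Segment

variable {E : Type*} [NormedAddCommGroup E] [NormedSpace ℝ E]

theorem dist_lineMap_lt_of_dist_lt {w a c : E} {t : ℝ} (ht : t ∈ Set.Ioo 0 1)
    (h : dist w a < dist w c) : dist w (AffineMap.lineMap c a t) < dist w c := by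
  obtain ⟨ht0, ht1⟩ := ht
  have hsplit : w - AffineMap.lineMap c a t = (1 - t) • (w - c) + t • (w - a) := by
    rw [AffineMap.lineMap_apply_module]; module
  rw [dist_eq_norm, dist_eq_norm] at h ⊢
  rw [hsplit]
  calc ‖(1 - t) • (w - c) + t • (w - a)‖
      ≤ (1 - t) * ‖w - c‖ + t * ‖w - a‖ := by
        refine (norm_add_le _ _).trans_eq ?_
        rw [norm_smul, norm_smul, Real.norm_of_nonneg (by linarith), Real.norm_of_nonneg ht0.le]
    _ < ‖w - c‖ := by nlinarith

theorem eventually_lt_dist_lineMap {w a c : E} {r : ℝ} (h : r < dist w c) :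
    ∀ᶠ t in 𝓝 (0 : ℝ), r < dist w (AffineMap.lineMap c a t) := by
  have hcont : Continuous fun t : ℝ => dist w (AffineMap.lineMap c a t) :=
    continuous_const.dist AffineMap.lineMap_continuous
  exact hcont.tendsto' 0 _ (by simp) |>.eventually_const_lt h

theorem eventually_lineMap_notMem {a c : E} (hac : a ≠ c) {s : Set E} (hs : s.Finite) :
    ∀ᶠ t : ℝ in cofinite, AffineMap.lineMap c a t ∉ s :=
  (AffineMap.lineMap_injective ℝ hac.symm).tendsto_cofinite.eventually
    hs.eventually_cofinite_notMem

end Segment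

theorem exists_isPlacement_of_dominated {C V : Type*} [Finite C] [Finite V]
    {pref : V → C → C → Prop} (hord : ∀ v : V, IsStrictTotalOrder C (pref v)) {a b c : C}
    (hbc : ∀ v, pref v b c) (hbetween : ∀ v d, d ≠ b → d ≠ c → ¬ (pref v b d ∧ pref v d c))
    (hab : ∀ v, pref v a b) (v₀ : V) {γ : {d : C // d ≠ b} ⊕ V → Plane} (hγ : Injective γ)
    (hpref : ∀ v (x y : {d : C // d ≠ b}), pref v x y →
      dist (γ (.inr v)) (γ (.inl x)) < dist (γ (.inr v)) (γ (.inl y))) :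
    ∃ p, IsPlacement pref γ p := by
  have hac : ∀ v, pref v a c := fun v => (hord v).trans _ _ _ (hab v) (hbc v)
  have hne : ∀ {x y}, pref v₀ x y → x ≠ y := by
    rintro x _ hxy rfl; exact (hord v₀).irrefl x hxy
  let a' : {d : C // d ≠ b} := ⟨a, hne (hab v₀)⟩
  let c' : {d : C // d ≠ b} := ⟨c, (hne (hbc v₀)).symm⟩
  have hac' : γ (.inl a') ≠ γ (.inl c') :=
    hγ.ne (Sum.inl_injective.ne (Subtype.coe_ne_coe.1 (hne (hac v₀))))
  set B := AffineMap.lineMap (γ (.inl c')) (γ (.inl a')) (k := ℝ)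
  have hfar : ∀ᶠ t in 𝓝[>] 0, ∀ v (x : {d : C // d ≠ b}), pref v x b →
      dist (γ (.inr v)) (γ (.inl x)) < dist (γ (.inr v)) (B t) := by
    refine eventually_all.2 fun v => eventually_all.2 fun x => eventually_imp_distrib_left.2 ?_
    exact fun hxb => nhdsWithin_le_nhds <|
      eventually_lt_dist_lineMap (hpref v x c' ((hord v).trans _ _ _ hxb (hbc v)))
  have hnew : ∀ᶠ t in 𝓝[>] 0, B t ∉ Set.range γ :=
    (nhdsGT_le_nhdsNE 0).trans (nhdsNE_le_cofinite 0) <|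
      eventually_lineMap_notMem hac' (Set.finite_range γ)
  have hsmall : ∀ᶠ t in 𝓝[>] (0 : ℝ), t ∈ Set.Ioo 0 1 := Ioo_mem_nhdsGT one_pos
  obtain ⟨t, ht, hBnew, hBfar⟩ := (hsmall.and (hnew.and hfar)).exists
  refine ⟨B t, hBnew, hBfar, fun v y hby => ?_⟩
  have hBc : dist (γ (.inr v)) (B t) < dist (γ (.inr v)) (γ (.inl c')) :=
    dist_lineMap_lt_of_dist_lt ht (hpref v a' c' (hac v))
  by_cases hyc : y.1 = c
  · rwa [show y = c' from Subtype.ext hyc]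
  · have hcy : pref v c y := by
      by_contra hnot
      exact hyc ((hord v).trichotomous _ _ (fun h => hbetween v y y.2 hyc ⟨hby, h⟩) hnot)
    exact hBc.trans (hpref v c' y hcy)

/-- Reduction Rule 2: if every voter prefers `b` over `c`, no voter ranks
any candidate strictly between `b` and `c`, and some candidate `a` is preferred over `b`
by every voter, then the election is 2-Euclidean iff the subelection induced by
`C \ {b}` is 2-Euclidean. -/
theorem stmt_6 {C V : Type*} [Fintype C] [Fintype V]
    (pref : V → C → C → Prop) (hord : ∀ v : V, IsStrictTotalOrder C (pref v))
    (b c : C)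
    (h1 : ∀ v : V, pref v b c)
    (h2 : ∀ (v : V) (d : C), d ≠ b → d ≠ c → ¬ (pref v b d ∧ pref v d c))
    (h3 : ∃ a : C, ∀ v : V, pref v a b) :
    IsEuclidean2 pref ↔
      IsEuclidean2 (fun (v : V) (x y : {d : C // d ≠ b}) => pref v x.1 y.1) := by
  obtain ⟨a, ha⟩ := h3
  refine ⟨fun h => h.comap Subtype.val_injective, fun ⟨γ, hγ, hpref⟩ => ?_⟩
  obtain ⟨p, hp⟩ : ∃ p, IsPlacement pref γ p := by
    rcases isEmpty_or_nonempty V with hV | ⟨⟨v₀⟩⟩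
    · obtain ⟨p, hp⟩ := (Set.finite_range γ).infinite_compl.nonempty
      exact ⟨p, hp, isEmptyElim, isEmptyElim⟩
    · exact exists_isPlacement_of_dominated hord h1 h2 ha v₀ hγ hpref
  exact hp.isEuclidean2 (fun v => (hord v).irrefl b) hγ hpref
end
end

section
/- Let (C,V) be an election with a candidate a ∈ C that is ranked last by every voter (i.e., b ≻_v a for all b ∈ C \ {a} and all v ∈ V). Then (C,V) is 2-Euclidean if and only if the subelection induced by C \ {a} is 2-Euclidean. -/
noncomputable section

/-- Reduction Rule 1: if the candidate `a` is ranked last in every vote,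
then the election is 2-Euclidean iff the subelection induced by `C \ {a}` is. -/
theorem stmt_7 {C V : Type*} [Fintype C] [Fintype V]
    (pref : V → C → C → Prop) (hord : ∀ v : V, IsStrictTotalOrder C (pref v))
    (a : C) (hlast : ∀ (b : C), b ≠ a → ∀ v : V, pref v b a) :
    IsEuclidean2 pref ↔
      IsEuclidean2 (fun (v : V) (x y : {d : C // d ≠ a}) => pref v x.1 y.1) := by
  classical
  constructor
  · rintro ⟨γ, hinj, hγ⟩
    refine ⟨fun x => Sum.elim (fun c => γ (Sum.inl c.1)) (fun v => γ (Sum.inr v)) x, ?_, ?_⟩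
    · rintro (x|x) (y|y) h <;> simp only [Sum.elim_inl, Sum.elim_inr] at h
      · exact congrArg Sum.inl (Subtype.ext (Sum.inl_injective (hinj h)))
      · exact absurd (hinj h) (by simp)
      · exact absurd (hinj h) (by simp)
      · exact congrArg Sum.inr (Sum.inr_injective (hinj h))
    · exact fun v b c h => hγ v b.1 c.1 h
  · rintro ⟨γ, hinj, hγ⟩
    set M : ℝ := ∑ x : ({d : C // d ≠ a} ⊕ V), ‖γ x‖ with hM
    have hMnn : 0 ≤ M := Finset.sum_nonneg fun x _ => norm_nonneg _
    have hbound : ∀ x, ‖γ x‖ ≤ M := fun x =>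
      Finset.single_le_sum (f := fun x => ‖γ x‖) (fun i _ => norm_nonneg _) (Finset.mem_univ x)
    set p : Plane := (4*M+1) • EuclideanSpace.single (0 : Fin 2) (1:ℝ) with hp
    have hpnorm : ‖p‖ = 4*M+1 := by
      rw [hp, norm_smul, EuclideanSpace.norm_single]
      rw [norm_one, mul_one, Real.norm_eq_abs, abs_of_nonneg (by linarith)]
    have hpne : ∀ x, γ x ≠ p := by
      intro x hx
      have := hbound x
      rw [hx, hpnorm] at this
      linarith
    refine ⟨Sum.elim (fun c => if h : c = a then p else γ (Sum.inl ⟨c, h⟩))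
      (fun v => γ (Sum.inr v)), ?_, ?_⟩
    · rintro (x|x) (y|y) h <;> simp only [Sum.elim_inl, Sum.elim_inr] at h
      · by_cases hx : x = a <;> by_cases hy : y = a
        · exact congrArg Sum.inl (hx.trans hy.symm)
        · rw [dif_pos hx, dif_neg hy] at h
          exact absurd h.symm (hpne _)
        · rw [dif_neg hx, dif_pos hy] at h
          exact absurd h (hpne _)
        · rw [dif_neg hx, dif_neg hy] at h
          have := hinj h
          simpa [Subtype.ext_iff] using this
      · by_cases hx : x = a
        · rw [dif_pos hx] at h
          exact absurd h.symm (hpne _)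
        · rw [dif_neg hx] at h
          exact absurd (hinj h) (by simp)
      · by_cases hy : y = a
        · rw [dif_pos hy] at h
          exact absurd h (hpne _)
        · rw [dif_neg hy] at h
          exact absurd (hinj h) (by simp)
      · exact congrArg Sum.inr (Sum.inr_injective (hinj h))
    · intro v b c h
      haveI := hord v
      simp only [Sum.elim_inl, Sum.elim_inr]
      by_cases hb : b = a
      · exfalso
        have h' : pref v a c := hb ▸ h
        by_cases hc : c = a
        · exact irrefl_of (pref v) a (hc ▸ h')
        · exact irrefl_of (pref v) a (trans_of (pref v) h' (hlast c hc v))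
      · by_cases hc : c = a
        · rw [dif_neg hb, dif_pos hc]
          have h1 : dist (γ (Sum.inr v)) (γ (Sum.inl ⟨b, hb⟩)) ≤ 2 * M := by
            calc dist (γ (Sum.inr v)) (γ (Sum.inl ⟨b, hb⟩))
                ≤ ‖γ (Sum.inr v)‖ + ‖γ (Sum.inl ⟨b, hb⟩)‖ := dist_le_norm_add_norm _ _
              _ ≤ 2 * M := by
                  have := hbound (Sum.inr v); have := hbound (Sum.inl ⟨b, hb⟩); linarith
          have h2 : 3 * M + 1 ≤ dist (γ (Sum.inr v)) p := by
            have habs := abs_norm_sub_norm_le (γ (Sum.inr v)) p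
            rw [abs_le] at habs
            have h3 := habs.1
            have hb1 := hbound (Sum.inr v)
            rw [hpnorm] at h3
            rw [dist_eq_norm]
            linarith
          linarith
        · rw [dif_neg hb, dif_neg hc]
          exact hγ v ⟨b, hb⟩ ⟨c, hc⟩ h
end
end

section
/- Let γ : C → ℝ² be an embedding of a finite candidate set with |C| = m. The number of distinct linear orders v on C whose region R_γ(v) = ⋂_{a ≻_v b} H(a,b) is nonempty (where H(a,b) is the open half-plane of points strictly closer to γ(a) than to γ(b)) is at most m(3m−10)(m+1)(m−1)/24 + m(m−1) + 1. -/
noncomputable section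

/-- The region of the ranking `σ` (position 0 is the most preferred): all points strictly
closer to `γ a` than to `γ b` whenever `σ` ranks `a` before `b`. -/
def region {C : Type*} {m : ℕ} (γ : C → Plane) (σ : C ≃ Fin m) : Set Plane :=
  {p : Plane | ∀ a b : C, σ a < σ b → dist p (γ a) < dist p (γ b)}

/-!
Rotate the plane so that no two candidates share their first coordinate, and call the second
coordinate the height. The nonempty regions unbounded below all meet one low horizontal line, on
which they are disjoint and separated by the at most `C(m, 2)` points where the line crosses a
bisector, so there are at most `C(m, 2) + 1` of them. A region bounded below has a lowest corner
`v` on two bisectors, with cotangents `lo < hi` bounding the upward directions that point into the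
region; as regions of distinct orders are disjoint, the region is determined by `v` and `lo`. If
the two bisectors share a candidate, `v` is the circumcentre of three candidates and `lo` is either
the least or the middle cotangent of their three bisectors: two regions per triple. Otherwise `v`
is where the bisectors of a matching of four candidates cross: three regions per quadruple. This
gives `2 C(m, 3) + 3 C(m, 4) + C(m, 2) + 1`, which is the stated bound.
-/

open scoped RealInnerProductSpace
open Set Filter Topology Function

theorem Finset.pair_eq_pair_iff {α : Type*} [DecidableEq α] {a b c d : α} :
    ({a, b} : Finset α) = {c, d} ↔ a = c ∧ b = d ∨ a = d ∧ b = c := by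
  rw [← Finset.coe_inj, Finset.coe_pair, Finset.coe_pair, Set.pair_eq_pair_iff]

namespace RankingRegion

theorem exists_lt_and_lt_of_ne {C : Type*} {m : ℕ} {σ σ' : C ≃ Fin m} (h : σ ≠ σ') :
    ∃ a b, σ a < σ b ∧ σ' b < σ' a := by
  by_contra! hmono
  have hτ : StrictMono (σ' ∘ σ.symm) := fun i j hij =>
    (hmono _ _ (by simpa using hij)).lt_of_ne (by simpa using hij.ne)
  have hid : σ' ∘ σ.symm = id :=
    (hτ.range_inj strictMono_id).1 (by rw [← Equiv.coe_trans, Equiv.range_eq_univ, range_id])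
  exact h (Equiv.ext fun a => by simpa using (congrFun hid (σ a)).symm)

theorem ncard_le_card_add_one_of_forall_mem_uIoo {ι α : Type*} [LinearOrder α] {s : Set ι}
    (f : ι → α) (T : Finset α) (hsep : s.Pairwise fun i j => ∃ t ∈ T, t ∈ uIoo (f i) (f j)) :
    s.ncard ≤ T.card + 1 := by
  classical
  set rank : ι → ℕ := fun i => (T.filter (· < f i)).card
  have rank_lt : ∀ i ∈ s, ∀ j ∈ s, f i < f j → rank i < rank j := by
    intro i hi j hj hij
    obtain ⟨t, htT, ht⟩ := hsep hi hj (fun h => hij.ne (congrArg f h))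
    rw [uIoo_of_lt hij] at ht
    refine Finset.card_lt_card ((Finset.ssubset_iff_of_subset ?_).2 ⟨t, ?_, ?_⟩)
    · intro z hz
      simp only [Finset.mem_filter] at hz ⊢
      exact ⟨hz.1, hz.2.trans hij⟩
    · simpa [htT] using ht.2
    · simp [ht.1.le]
  have hinj : InjOn rank s := by
    intro i hi j hj hij
    by_contra hne
    obtain ⟨t, -, ht⟩ := hsep hi hj hne
    rcases lt_trichotomy (f i) (f j) with h | h | h
    · exact (rank_lt i hi j hj h).ne hij
    · simp [h, uIoo] at ht
    · exact (rank_lt j hj i hi h).ne hij.symm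
  calc s.ncard ≤ (Finset.range (T.card + 1) : Set ℕ).ncard :=
        ncard_le_ncard_of_injOn rank (fun i _ => by
          simpa [rank, Nat.lt_succ_iff] using Finset.card_filter_le T _) hinj
    _ = T.card + 1 := by rw [ncard_coe_finset, Finset.card_range]

theorem card_image_offDiag_le_choose_two {C α : Type*} [DecidableEq C] [DecidableEq α]
    (s : Finset C) (f : C → C → α) (hf : ∀ a b, f a b = f b a) :
    (s.offDiag.image fun e => f e.1 e.2).card ≤ s.card.choose 2 := by
  have : s.offDiag.image (fun e => f e.1 e.2) =
      (s.offDiag.image Sym2.mk.uncurry).image (Sym2.lift ⟨f, hf⟩) := by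
    rw [Finset.image_image]; rfl
  rw [this, ← Sym2.card_image_offDiag]
  exact Finset.card_image_le

theorem eq_of_forall_le_iff_of_card_le_three {α : Type*} [LinearOrder α] {X : Finset α}
    (hX : X.card ≤ 3) {x y x' y' : α} (hx : x ∈ X) (hy : y ∈ X) (hx' : x' ∈ X) (hy' : y' ∈ X)
    (hxy : x < y) (hxy' : x' < y') (h : (∀ z ∈ X, x ≤ z) ↔ ∀ z ∈ X, x' ≤ z) : x = x' := by
  classical
  have no_chain : ∀ {a b c d}, a ∈ X → b ∈ X → c ∈ X → d ∈ X → a < b → b < c → c < d → False := by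
    intro a b c d ha hb hc hd hab hbc hcd
    have h4 : ({a, b, c, d} : Finset α).card = 4 := by
      rw [Finset.card_insert_of_notMem (by simp [hab.ne, (hab.trans hbc).ne,
        (hab.trans (hbc.trans hcd)).ne]), Finset.card_insert_of_notMem (by simp [hbc.ne,
        (hbc.trans hcd).ne]), Finset.card_pair hcd.ne]
    have := Finset.card_le_card (s := {a, b, c, d}) (by
      simp only [Finset.insert_subset_iff, Finset.singleton_subset_iff]; exact ⟨ha, hb, hc, hd⟩)
    omega
  by_cases hmin : ∀ z ∈ X, x ≤ z
  · exact le_antisymm (hmin x' hx') (h.1 hmin x hx)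
  · have hmin' := (not_congr h).1 hmin
    push Not at hmin hmin'
    obtain ⟨z, hz, hzx⟩ := hmin
    obtain ⟨z', hz', hzx'⟩ := hmin'
    rcases lt_trichotomy x x' with hlt | heq | hlt
    · exact (no_chain hz hx hx' hy' hzx hlt hxy').elim
    · exact heq
    · exact (no_chain hz' hx' hx hy hzx' hlt hxy).elim

section Bisector

variable {E : Type*} [NormedAddCommGroup E] [InnerProductSpace ℝ E]

def bisectorGap (x y p : E) : ℝ := ⟪p, y - x⟫ - (‖y‖ ^ 2 - ‖x‖ ^ 2) / 2

variable (x y : E) {p : E}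

theorem two_mul_bisectorGap (p : E) : 2 * bisectorGap x y p = dist p x ^ 2 - dist p y ^ 2 := by
  rw [bisectorGap, dist_eq_norm, dist_eq_norm, norm_sub_sq_real, norm_sub_sq_real, inner_sub_right]
  ring

theorem bisectorGap_neg_iff : bisectorGap x y p < 0 ↔ dist p x < dist p y := by
  have := two_mul_bisectorGap x y p
  rw [← sq_lt_sq₀ dist_nonneg dist_nonneg]
  constructor <;> intro <;> linarith

theorem bisectorGap_eq_zero_iff : bisectorGap x y p = 0 ↔ dist p x = dist p y := by
  have := two_mul_bisectorGap x y p
  rw [← sq_eq_sq₀ dist_nonneg dist_nonneg]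
  constructor <;> intro <;> linarith

theorem bisectorGap_swap (p : E) : bisectorGap y x p = -bisectorGap x y p := by
  rw [bisectorGap, bisectorGap, ← neg_sub y x, inner_neg_right]
  ring

theorem bisectorGap_sub_bisectorGap (p q : E) :
    bisectorGap x y p - bisectorGap x y q = ⟪p - q, y - x⟫ := by
  rw [bisectorGap, bisectorGap, inner_sub_left]
  ring

theorem bisectorGap_add_smul (p w : E) (t : ℝ) :
    bisectorGap x y (p + t • w) = bisectorGap x y p + t * ⟪w, y - x⟫ := by
  rw [← sub_eq_iff_eq_add', bisectorGap_sub_bisectorGap, add_sub_cancel_left,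
    real_inner_smul_left]

@[fun_prop]
theorem continuous_bisectorGap : Continuous (bisectorGap x y) := by
  unfold bisectorGap
  fun_prop

end Bisector

section Region

variable {C : Type*} {m : ℕ} {γ : C → Plane} {σ σ' : C ≃ Fin m} {p : Plane}

theorem mem_region_iff :
    p ∈ region γ σ ↔ ∀ a b, σ a < σ b → bisectorGap (γ a) (γ b) p < 0 :=
  forall₂_congr fun _ _ => imp_congr_right fun _ => (bisectorGap_neg_iff _ _).symm

theorem isOpen_region [Finite C] : IsOpen (region γ σ) := by
  have : region γ σ = ⋂ (a) (b) (_ : σ a < σ b), {p | bisectorGap (γ a) (γ b) p < 0} := by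
    ext; simp [mem_region_iff]
  rw [this]
  exact isOpen_iInter_of_finite fun a => isOpen_iInter_of_finite fun b =>
    isOpen_iInter_of_finite fun _ => isOpen_lt (by fun_prop) continuous_const

theorem convex_region : Convex ℝ (region γ σ) := by
  intro p hp q hq s t hs ht hst
  rw [mem_region_iff] at hp hq ⊢
  intro a b hab
  have hcomb : bisectorGap (γ a) (γ b) (s • p + t • q) =
      s * bisectorGap (γ a) (γ b) p + t * bisectorGap (γ a) (γ b) q := by
    simp only [bisectorGap, inner_add_left, real_inner_smul_left]
    linear_combination (‖γ b‖ ^ 2 - ‖γ a‖ ^ 2) / 2 * hst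
  have hmax := max_lt (hp a b hab) (hq a b hab)
  rw [hcomb]
  nlinarith [mul_le_mul_of_nonneg_left (le_max_left (bisectorGap (γ a) (γ b) p)
    (bisectorGap (γ a) (γ b) q)) hs, mul_le_mul_of_nonneg_left (le_max_right
    (bisectorGap (γ a) (γ b) p) (bisectorGap (γ a) (γ b) q)) ht]

theorem bisectorGap_nonpos_of_mem_closure (hp : p ∈ closure (region γ σ)) {a b : C}
    (hab : σ a < σ b) : bisectorGap (γ a) (γ b) p ≤ 0 :=
  closure_minimal (fun _ hq => (mem_region_iff.1 hq a b hab).le)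
    (isClosed_le (continuous_bisectorGap _ _) continuous_const) hp

theorem eq_of_mem_region (hσ : p ∈ region γ σ) (hσ' : p ∈ region γ σ') : σ = σ' := by
  by_contra h
  obtain ⟨a, b, hab, hba⟩ := exists_lt_and_lt_of_ne h
  exact (hσ a b hab).asymm (hσ' b a hba)

end Region

section Coordinates

theorem inner_eq_coord (p q : Plane) : ⟪p, q⟫ = p 0 * q 0 + p 1 * q 1 := by
  simp [PiLp.inner_apply, Fin.sum_univ_two]
  ring

theorem inner_single_zero (n : Plane) : ⟪EuclideanSpace.single 0 1, n⟫ = n 0 := by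
  simp [inner_eq_coord]

/-- `!₂[orthCot n, 1]` is orthogonal to `n`: `orthCot n` is the cotangent of the inclination of
the lines orthogonal to `n`. -/
def orthCot (n : Plane) : ℝ := -n 1 / n 0

theorem inner_dir (x : ℝ) (n : Plane) : ⟪!₂[x, 1], n⟫ = x * n 0 + n 1 := by
  simp [inner_eq_coord]

variable {n : Plane}

theorem inner_dir_neg_iff_of_neg (hn : n 0 < 0) (x : ℝ) :
    ⟪!₂[x, 1], n⟫ < 0 ↔ orthCot n < x := by
  rw [inner_dir, orthCot, div_lt_iff_of_neg hn]
  constructor <;> intro <;> linarith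

theorem inner_dir_neg_iff_of_pos (hn : 0 < n 0) (x : ℝ) :
    ⟪!₂[x, 1], n⟫ < 0 ↔ x < orthCot n := by
  rw [inner_dir, orthCot, lt_div_iff₀ hn]
  constructor <;> intro <;> linarith

theorem orthCot_neg (n : Plane) : orthCot (-n) = orthCot n := by
  simp [orthCot, div_neg, neg_div]

theorem orthCot_sub_comm (x y : Plane) : orthCot (x - y) = orthCot (y - x) := by
  rw [← neg_sub, orthCot_neg]

variable {C : Type*} {m : ℕ}

theorem nonempty_region_comp_iff (e : Plane ≃ᵢ Plane) (γ : C → Plane) (σ : C ≃ Fin m) :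
    (region (e ∘ γ) σ).Nonempty ↔ (region γ σ).Nonempty := by
  have hdist : ∀ p x, dist p (e x) = dist (e.symm p) x := fun p x => by
    rw [← e.symm.dist_eq, e.symm_apply_apply]
  have : region (e ∘ γ) σ = e.symm ⁻¹' region γ σ := by
    ext p
    exact forall₂_congr fun a b => by simp only [comp_apply, hdist]
  rw [this, e.symm.surjective.nonempty_preimage]

theorem exists_linearIsometryEquiv_injective_coord [Finite C] {γ : C → Plane}
    (hγ : Injective γ) : ∃ e : Plane ≃ₗᵢ[ℝ] Plane, Injective fun a => e (γ a) 0 := by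
  obtain ⟨u, hu⟩ := Module.Dual.exists_forall_ne_zero_of_forall_exists
    (fun i : {e : C × C // e.1 ≠ e.2} => innerₛₗ ℝ (γ i.1.2 - γ i.1.1))
    (fun i => ⟨γ i.1.2 - γ i.1.1, by
      rw [innerₛₗ_apply_apply, real_inner_self_eq_norm_sq]
      exact pow_ne_zero 2 (norm_ne_zero_iff.2 (sub_ne_zero.2 fun h => i.2 (hγ h).symm))⟩)
  set e₀ : Plane := EuclideanSpace.single 0 1
  set R := Submodule.reflection (ℝ ∙ (u - ‖u‖ • e₀))ᗮ
  have hRu : R u = ‖u‖ • e₀ := Submodule.reflection_sub (by simp [norm_smul, e₀])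
  have hcoord : ∀ x, ‖u‖ * R x 0 = ⟪x, u⟫ := fun x => by
    rw [← R.inner_map_map x u, hRu, real_inner_smul_right, EuclideanSpace.inner_single_right]
    simp
  refine ⟨R, fun a b hab => by_contra fun hne => hu ⟨(a, b), hne⟩ ?_⟩
  rw [innerₛₗ_apply_apply, inner_sub_left, ← hcoord, ← hcoord]
  simp only at hab
  rw [hab, sub_self]

end Coordinates

section Unbounded

/-- The first coordinate of the point where the horizontal line at height `y₀` meets the
perpendicular bisector of `x y`. -/
def crossAt (y₀ : ℝ) (x y : Plane) : ℝ := -bisectorGap x y !₂[0, y₀] / (y - x) 0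

theorem bisectorGap_eq_mul_sub_crossAt {x y : Plane} (hxy : x 0 ≠ y 0) (p : Plane) :
    bisectorGap x y p = (y - x) 0 * (p 0 - crossAt (p 1) x y) := by
  have hd : (y - x) 0 ≠ 0 := by simpa [sub_eq_zero] using hxy.symm
  have h := bisectorGap_sub_bisectorGap x y p !₂[0, p 1]
  simp only [inner_eq_coord] at h
  simp only [PiLp.sub_apply, Matrix.cons_val_zero, sub_zero, Matrix.cons_val_one,
    Matrix.cons_val_fin_one, sub_self, zero_mul, add_zero] at h
  rw [crossAt, PiLp.sub_apply] at *
  field_simp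
  linarith

theorem crossAt_comm (y₀ : ℝ) (x y : Plane) : crossAt y₀ y x = crossAt y₀ x y := by
  rw [crossAt, crossAt, bisectorGap_swap, ← neg_sub y x, PiLp.neg_apply, neg_div_neg_eq]

theorem crossAt_mem_uIoo {x y p q : Plane} (hxy : x 0 ≠ y 0) (hp : bisectorGap x y p < 0)
    (hq : 0 < bisectorGap x y q) (hpq : p 1 = q 1) : crossAt (p 1) x y ∈ uIoo (p 0) (q 0) := by
  rw [bisectorGap_eq_mul_sub_crossAt hxy] at hp hq
  rw [← hpq] at hq
  rw [uIoo, mem_Ioo, inf_lt_iff, lt_sup_iff]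
  rcases lt_or_gt_of_ne (show (y - x) 0 ≠ 0 by simpa [sub_eq_zero] using hxy.symm) with hd | hd
  · exact ⟨Or.inr (by nlinarith), Or.inl (by nlinarith)⟩
  · exact ⟨Or.inl (by nlinarith), Or.inr (by nlinarith)⟩

variable {C : Type*} {m : ℕ} {γ : C → Plane}

theorem exists_forall_exists_mem_region_coord_eq [Finite C] {S : Set (C ≃ Fin m)}
    (hS : ∀ σ ∈ S, (region γ σ).Nonempty ∧ ¬BddBelow ((· 1) '' region γ σ)) :
    ∃ y₀ : ℝ, ∀ σ ∈ S, ∃ q ∈ region γ σ, q 1 = y₀ := by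
  choose! p hp using fun σ hσ => (hS σ hσ).1
  obtain ⟨M, hM⟩ := Finite.exists_le fun σ : C ≃ Fin m => -p σ 1
  refine ⟨-M - 1, fun σ hσ => ?_⟩
  obtain ⟨_, ⟨q, hq, rfl⟩, hqlt⟩ := not_bddBelow_iff.1 (hS σ hσ).2 (-M - 1)
  have hconv : ((· 1) '' region γ σ).OrdConnected :=
    convex_iff_ordConnected.1 (convex_region.is_linear_image (EuclideanSpace.proj 1).isLinear)
  obtain ⟨r, hr, hr₁⟩ := hconv.out ⟨q, hq, rfl⟩ ⟨p σ, hp σ hσ, rfl⟩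
    ⟨hqlt.le, by linarith [hM σ]⟩
  exact ⟨r, hr, hr₁⟩

theorem ncard_not_bddBelow_le [Fintype C] (hγ₀ : Injective fun a => γ a 0) :
    {σ : C ≃ Fin m | (region γ σ).Nonempty ∧ ¬BddBelow ((· 1) '' region γ σ)}.ncard ≤
      (Fintype.card C).choose 2 + 1 := by
  classical
  obtain ⟨y₀, hy₀⟩ := exists_forall_exists_mem_region_coord_eq (γ := γ) (m := m) fun _ h => h
  choose! q hq hq₁ using hy₀
  set T := Finset.univ.offDiag.image fun e : C × C => crossAt y₀ (γ e.1) (γ e.2)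
  have hT : T.card ≤ (Fintype.card C).choose 2 :=
    card_image_offDiag_le_choose_two _ _ fun a b => (crossAt_comm y₀ (γ a) (γ b)).symm
  refine (ncard_le_card_add_one_of_forall_mem_uIoo (fun σ => q σ 0) T ?_).trans (by omega)
  intro σ hσ σ' hσ' hne
  obtain ⟨a, b, hab, hba⟩ := exists_lt_and_lt_of_ne hne
  have hab' : a ≠ b := ne_of_apply_ne σ hab.ne
  refine ⟨crossAt y₀ (γ a) (γ b), Finset.mem_image.2 ⟨(a, b), by simp [hab'], rfl⟩, ?_⟩
  have h₁ := mem_region_iff.1 (hq σ hσ) a b hab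
  have h₂ := mem_region_iff.1 (hq σ' hσ') b a hba
  rw [bisectorGap_swap, neg_lt_zero] at h₂
  simpa only [hq₁ σ hσ] using
    crossAt_mem_uIoo (hγ₀.ne hab') h₁ h₂ ((hq₁ σ hσ).trans (hq₁ σ' hσ').symm)

end Unbounded

section BoundedBelow

theorem norm_le_abs_add_abs (p : Plane) : ‖p‖ ≤ |p 0| + |p 1| := by
  rw [EuclideanSpace.norm_eq, Real.sqrt_le_iff, Fin.sum_univ_two, Real.norm_eq_abs,
    Real.norm_eq_abs, sq_abs, sq_abs]
  refine ⟨by positivity, ?_⟩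
  nlinarith [abs_nonneg (p 0), abs_nonneg (p 1), sq_abs (p 0), sq_abs (p 1)]

theorem exists_mem_coord_lt {s : Set Plane} (hs : IsOpen s) {p : Plane} (hp : p ∈ s) :
    ∃ q ∈ s, q 1 < p 1 := by
  obtain ⟨ε, hε, hball⟩ := Metric.isOpen_iff.1 hs p hp
  refine ⟨p - (ε / 2) • EuclideanSpace.single 1 1, hball ?_, by simpa using hε⟩
  simpa [norm_smul, abs_of_pos hε] using hε

theorem mul_coord_le_of_bisectorGap_nonpos {x y p : Plane} (hp : bisectorGap x y p ≤ 0) {r : ℝ}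
    (hr : |p 1| ≤ r) :
    p 0 * (y - x) 0 ≤ |(‖y‖ ^ 2 - ‖x‖ ^ 2) / 2| + |(y - x) 1| * r := by
  rw [bisectorGap, inner_eq_coord] at hp
  have h₁ : -(p 1 * (y - x) 1) ≤ |(y - x) 1| * r := by
    calc -(p 1 * (y - x) 1) ≤ |p 1| * |(y - x) 1| := by rw [← abs_mul]; exact neg_le_abs _
      _ ≤ |(y - x) 1| * r := by rw [mul_comm]; gcongr
  linarith [le_abs_self ((‖y‖ ^ 2 - ‖x‖ ^ 2) / 2)]

variable {C : Type*} {m : ℕ} {γ : C → Plane} {σ : C ≃ Fin m}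

theorem exists_inner_nonneg_of_bddBelow [Finite C] (hne : (region γ σ).Nonempty)
    (hbdd : BddBelow ((· 1) '' region γ σ)) {w : Plane} (hw : w 1 = 0) :
    ∃ a b, σ a < σ b ∧ 0 ≤ ⟪w, γ b - γ a⟫ := by
  by_contra! hneg
  obtain ⟨p, hp⟩ := hne
  obtain ⟨y, hy⟩ := hbdd
  -- far enough along `w`, the points at height `y - 1` would satisfy every constraint
  set q : Plane := p - (p 1 - y + 1) • EuclideanSpace.single 1 1
  have hfar : ∀ᶠ s : ℝ in atTop, q + s • w ∈ region γ σ := by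
    simp only [mem_region_iff, bisectorGap_add_smul]
    refine eventually_all.2 fun a => eventually_all.2 fun b => ?_
    by_cases hab : σ a < σ b
    · filter_upwards [(tendsto_atBot_add_const_left _ (bisectorGap (γ a) (γ b) q)
        (tendsto_id.atTop_mul_const_of_neg (hneg a b hab))).eventually_lt_atBot 0] with s hs _
      simpa only [id] using hs
    · exact Eventually.of_forall fun _ h => absurd h hab
  obtain ⟨s, hs⟩ := hfar.exists
  have := hy ⟨_, hs, rfl⟩
  simp only [PiLp.add_apply, PiLp.sub_apply, PiLp.smul_apply, PiLp.single_eq_same, smul_eq_mul,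
    mul_one, hw, mul_zero, add_zero, q] at this
  linarith

theorem isCompact_closure_region_inter (hbdd : BddBelow ((· 1) '' region γ σ)) {a b a' b' : C}
    (hab : σ a < σ b) (hpos : γ a 0 < γ b 0) (hab' : σ a' < σ b') (hneg : γ b' 0 < γ a' 0)
    (h : ℝ) : IsCompact (closure (region γ σ) ∩ {p | p 1 ≤ h}) := by
  -- on a horizontal strip, `(a, b)` bounds the first coordinate above and `(a', b')` below
  obtain ⟨y₀, hy₀⟩ := hbdd
  have hlow : ∀ p ∈ closure (region γ σ), y₀ ≤ p 1 :=
    fun p hp => closure_minimal (fun q hq => hy₀ ⟨q, hq, rfl⟩)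
      (isClosed_le continuous_const (by fun_prop : Continuous fun p : Plane => p 1)) hp
  set r := |y₀| + |h|
  set c := (‖γ b‖ ^ 2 - ‖γ a‖ ^ 2) / 2
  set c' := (‖γ b'‖ ^ 2 - ‖γ a'‖ ^ 2) / 2
  set M := (|c| + |(γ b - γ a) 1| * r) / (γ b - γ a) 0 -
    (|c'| + |(γ b' - γ a') 1| * r) / (γ b' - γ a') 0
  refine (isCompact_closedBall 0 (M + r)).of_isClosed_subset
    (isClosed_closure.inter (isClosed_le (by fun_prop) continuous_const)) fun p ⟨hp, hph⟩ => ?_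
  have hr : |p 1| ≤ r := by
    have := hlow p hp
    have : p 1 ≤ h := hph
    exact abs_le.2 ⟨by linarith [neg_abs_le y₀, abs_nonneg h],
      by linarith [le_abs_self h, abs_nonneg y₀]⟩
  have hn : 0 < (γ b - γ a) 0 := by simpa using hpos
  have hn' : (γ b' - γ a') 0 < 0 := by simpa using hneg
  have hup := (le_div_iff₀ hn).2
    (mul_coord_le_of_bisectorGap_nonpos (bisectorGap_nonpos_of_mem_closure hp hab) hr)
  have hdown := (div_le_iff_of_neg hn').2
    (mul_coord_le_of_bisectorGap_nonpos (bisectorGap_nonpos_of_mem_closure hp hab') hr)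
  rw [Metric.mem_closedBall, dist_zero_right]
  have hU : 0 ≤ (|c| + |(γ b - γ a) 1| * r) / (γ b - γ a) 0 :=
    div_nonneg (by positivity) hn.le
  have hL : (|c'| + |(γ b' - γ a') 1| * r) / (γ b' - γ a') 0 ≤ 0 :=
    div_nonpos_of_nonneg_of_nonpos (by positivity) hn'.le
  exact (norm_le_abs_add_abs p).trans
    (add_le_add (abs_le.2 ⟨by linarith, by linarith⟩) hr)

theorem exists_mem_closure_forall_coord_lt [Finite C] (hγ₀ : Injective fun a => γ a 0)
    (hne : (region γ σ).Nonempty) (hbdd : BddBelow ((· 1) '' region γ σ)) :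
    ∃ v ∈ closure (region γ σ), ∀ p ∈ region γ σ, v 1 < p 1 := by
  obtain ⟨a, b, hab, hpos⟩ :=
    exists_inner_nonneg_of_bddBelow hne hbdd (w := EuclideanSpace.single 0 1) (by simp)
  obtain ⟨a', b', hab', hneg⟩ :=
    exists_inner_nonneg_of_bddBelow hne hbdd (w := -EuclideanSpace.single 0 1) (by simp)
  rw [inner_single_zero, PiLp.sub_apply, sub_nonneg] at hpos
  rw [inner_neg_left, inner_single_zero, PiLp.sub_apply, neg_nonneg, sub_nonpos] at hneg
  have hpos' : γ a 0 < γ b 0 := hpos.lt_of_ne (hγ₀.ne (ne_of_apply_ne σ hab.ne))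
  have hneg' : γ b' 0 < γ a' 0 := hneg.lt_of_ne (hγ₀.ne (ne_of_apply_ne σ hab'.ne).symm)
  obtain ⟨p₀, hp₀⟩ := hne
  obtain ⟨v, ⟨hv, hvp₀⟩, hvmin⟩ :=
    (isCompact_closure_region_inter hbdd hab hpos' hab' hneg' (p₀ 1)).exists_isMinOn
      ⟨p₀, subset_closure hp₀, le_refl (p₀ 1)⟩
      (by fun_prop : Continuous fun p : Plane => p 1).continuousOn
  refine ⟨v, hv, fun p hp => ?_⟩
  obtain ⟨q, hq, hqp⟩ := exists_mem_coord_lt isOpen_region hp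
  refine lt_of_le_of_lt ?_ hqp
  by_cases hqp₀ : q 1 ≤ p₀ 1
  · exact hvmin ⟨subset_closure hq, hqp₀⟩
  · exact hvp₀.trans (not_le.1 hqp₀).le

theorem eventually_mem_region [Finite C] {v w : Plane} (hv : v ∈ closure (region γ σ))
    (hw : ∀ a b, σ a < σ b → dist v (γ a) = dist v (γ b) → ⟪w, γ b - γ a⟫ < 0) :
    ∀ᶠ t in 𝓝[>] (0 : ℝ), v + t • w ∈ region γ σ := by
  simp only [mem_region_iff]
  refine eventually_all.2 fun a => eventually_all.2 fun b => ?_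
  by_cases hab : σ a < σ b
  · rcases (bisectorGap_nonpos_of_mem_closure hv hab).lt_or_eq with hlt | heq
    · have hlim : Tendsto (fun t : ℝ => bisectorGap (γ a) (γ b) (v + t • w)) (𝓝[>] 0)
          (𝓝 (bisectorGap (γ a) (γ b) v)) := by
        simpa using ((by fun_prop : Continuous fun t : ℝ =>
          bisectorGap (γ a) (γ b) (v + t • w)).tendsto 0).mono_left nhdsWithin_le_nhds
      filter_upwards [hlim.eventually_lt_const hlt] with t ht _ using ht
    · filter_upwards [self_mem_nhdsWithin] with t (ht : 0 < t) _
      rw [bisectorGap_add_smul, heq, zero_add]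
      exact mul_neg_of_pos_of_neg ht (hw a b hab ((bisectorGap_eq_zero_iff _ _).1 heq))
  · exact Eventually.of_forall fun _ h => absurd h hab

theorem coord_pos_of_forall_inner_neg [Finite C] {v w : Plane} (hv : v ∈ closure (region γ σ))
    (hlow : ∀ p ∈ region γ σ, v 1 < p 1)
    (hw : ∀ a b, σ a < σ b → dist v (γ a) = dist v (γ b) → ⟪w, γ b - γ a⟫ < 0) : 0 < w 1 := by
  obtain ⟨t, ht, ht₀⟩ := ((eventually_mem_region hv hw).and self_mem_nhdsWithin).exists
  have := hlow _ ht
  simp only [PiLp.add_apply, PiLp.smul_apply, smul_eq_mul, lt_add_iff_pos_right] at this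
  exact pos_of_mul_pos_right this (le_of_lt ht₀)

theorem exists_active_inner_nonneg [Finite C] {v : Plane} (hv : v ∈ closure (region γ σ))
    (hlow : ∀ p ∈ region γ σ, v 1 < p 1) {w : Plane} (hw : w 1 = 0) :
    ∃ a b, σ a < σ b ∧ dist v (γ a) = dist v (γ b) ∧ 0 ≤ ⟪w, γ b - γ a⟫ := by
  by_contra! h
  exact (coord_pos_of_forall_inner_neg hv hlow h).ne' hw

theorem exists_orthCot_Ioo {ι : Type*} [Finite ι] {P : ι → Prop} {n : ι → Plane}
    (hn : ∀ i, P i → n i 0 ≠ 0) {x₀ : ℝ} (hx₀ : ∀ i, P i → ⟪!₂[x₀, 1], n i⟫ < 0)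
    (hneg : ∃ i, P i ∧ n i 0 < 0) (hpos : ∃ i, P i ∧ 0 < n i 0) :
    ∃ i j, P i ∧ P j ∧ orthCot (n i) < orthCot (n j) ∧
      ∀ x ∈ Ioo (orthCot (n i)) (orthCot (n j)), ∀ k, P k → ⟪!₂[x, 1], n k⟫ < 0 := by
  classical
  have := Fintype.ofFinite ι
  obtain ⟨i₀, hi₀⟩ := hneg
  obtain ⟨j₀, hj₀⟩ := hpos
  obtain ⟨i, hi, himax⟩ := Finset.exists_max_image (Finset.univ.filter fun i => P i ∧ n i 0 < 0)
    (fun i => orthCot (n i)) ⟨i₀, by simpa using hi₀⟩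
  obtain ⟨j, hj, hjmin⟩ := Finset.exists_min_image (Finset.univ.filter fun i => P i ∧ 0 < n i 0)
    (fun i => orthCot (n i)) ⟨j₀, by simpa using hj₀⟩
  simp only [Finset.mem_filter, Finset.mem_univ, true_and] at hi hj himax hjmin
  have hix₀ := (inner_dir_neg_iff_of_neg hi.2 x₀).1 (hx₀ i hi.1)
  have hx₀j := (inner_dir_neg_iff_of_pos hj.2 x₀).1 (hx₀ j hj.1)
  refine ⟨i, j, hi.1, hj.1, hix₀.trans hx₀j, fun x hx k hk => ?_⟩
  rcases (hn k hk).lt_or_gt with hk₀ | hk₀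
  · exact (inner_dir_neg_iff_of_neg hk₀ x).2 ((himax k ⟨hk, hk₀⟩).trans_lt hx.1)
  · exact (inner_dir_neg_iff_of_pos hk₀ x).2 (hx.2.trans_le (hjmin k ⟨hk, hk₀⟩))

/-- A point `v` on the perpendicular bisectors of `γ a₁, γ b₁` and of `γ a₂, γ b₂` such that the
directions `!₂[x, 1]` with `x` strictly between the cotangents of these bisectors point into
`region γ σ`. The lowest point of a region that is bounded below is one. -/
structure BottomCorner (γ : C → Plane) (σ : C ≃ Fin m) where
  v : Plane
  a₁ : C
  b₁ : C
  a₂ : C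
  b₂ : C
  ne₁ : a₁ ≠ b₁
  ne₂ : a₂ ≠ b₂
  dist_eq₁ : dist v (γ a₁) = dist v (γ b₁)
  dist_eq₂ : dist v (γ a₂) = dist v (γ b₂)
  cot_lt : orthCot (γ b₁ - γ a₁) < orthCot (γ b₂ - γ a₂)
  eventually_mem : ∀ x ∈ Ioo (orthCot (γ b₁ - γ a₁)) (orthCot (γ b₂ - γ a₂)),
    ∀ᶠ t in 𝓝[>] (0 : ℝ), v + t • !₂[x, 1] ∈ region γ σ

theorem nonempty_bottomCorner [Finite C] (hγ₀ : Injective fun a => γ a 0)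
    (hne : (region γ σ).Nonempty) (hbdd : BddBelow ((· 1) '' region γ σ)) :
    Nonempty (BottomCorner γ σ) := by
  obtain ⟨v, hv, hlow⟩ := exists_mem_closure_forall_coord_lt hγ₀ hne hbdd
  obtain ⟨p₀, hp₀⟩ := hne
  set P : C × C → Prop := fun e => σ e.1 < σ e.2 ∧ dist v (γ e.1) = dist v (γ e.2)
  have hne_of_P : ∀ e, P e → e.1 ≠ e.2 := fun e he => ne_of_apply_ne σ he.1.ne
  have hn : ∀ e, P e → (γ e.2 - γ e.1) 0 ≠ 0 := fun e he => by
    simpa [sub_eq_zero] using hγ₀.ne (hne_of_P e he).symm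
  have hinner : ∀ e, P e → ⟪p₀ - v, γ e.2 - γ e.1⟫ < 0 := fun e he => by
    rw [← bisectorGap_sub_bisectorGap, (bisectorGap_eq_zero_iff _ _).2 he.2, sub_zero]
    exact mem_region_iff.1 hp₀ _ _ he.1
  have hup : 0 < (p₀ - v) 1 :=
    coord_pos_of_forall_inner_neg hv hlow fun a b hab h => hinner (a, b) ⟨hab, h⟩
  have hx₀ : ∀ e, P e → ⟪!₂[(p₀ - v) 0 / (p₀ - v) 1, 1], γ e.2 - γ e.1⟫ < 0 := fun e he => by
    have h := hinner e he
    rw [inner_eq_coord] at h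
    rw [inner_dir, div_mul_eq_mul_div, div_add' _ _ _ hup.ne']
    exact div_neg_of_neg_of_pos (by linarith) hup
  obtain ⟨a, b, hab, hdist, hpos⟩ :=
    exists_active_inner_nonneg hv hlow (w := EuclideanSpace.single 0 1) (by simp)
  obtain ⟨a', b', hab', hdist', hneg⟩ :=
    exists_active_inner_nonneg hv hlow (w := -EuclideanSpace.single 0 1) (by simp)
  rw [inner_single_zero] at hpos
  rw [inner_neg_left, inner_single_zero, neg_nonneg] at hneg
  obtain ⟨i, j, hi, hj, hlt, hIoo⟩ := exists_orthCot_Ioo (P := P) hn hx₀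
    ⟨(a', b'), ⟨hab', hdist'⟩, (hn (a', b') ⟨hab', hdist'⟩).lt_of_le hneg⟩
    ⟨(a, b), ⟨hab, hdist⟩, (hn (a, b) ⟨hab, hdist⟩).symm.lt_of_le hpos⟩
  exact ⟨⟨v, i.1, i.2, j.1, j.2, hne_of_P i hi, hne_of_P j hj, hi.2, hj.2, hlt,
    fun x hx => eventually_mem_region hv fun a b hab h => hIoo x hx (a, b) ⟨hab, h⟩⟩⟩

end BoundedBelow

section Corners

variable {C : Type*} {m : ℕ} {γ : C → Plane} {σ σ' : C ≃ Fin m}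

theorem orthCot_eq_of_pair_eq [DecidableEq C] {a b c d : C}
    (h : ({a, b} : Finset C) = {c, d}) : orthCot (γ b - γ a) = orthCot (γ d - γ c) := by
  rcases Finset.pair_eq_pair_iff.1 h with ⟨rfl, rfl⟩ | ⟨rfl, rfl⟩
  · rfl
  · exact orthCot_sub_comm _ _

theorem dist_eq_of_pair_eq [DecidableEq C] {v : Plane} {a b c d : C}
    (h : ({a, b} : Finset C) = {c, d}) (hab : dist v (γ a) = dist v (γ b)) :
    dist v (γ c) = dist v (γ d) := by
  rcases Finset.pair_eq_pair_iff.1 h with ⟨rfl, rfl⟩ | ⟨rfl, rfl⟩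
  · exact hab
  · exact hab.symm

theorem eq_of_bisectorGap_eq_zero {x y x' y' v v' : Plane} (hxy : x 0 ≠ y 0)
    (hxy' : x' 0 ≠ y' 0) (hcot : orthCot (y - x) ≠ orthCot (y' - x'))
    (hv : bisectorGap x y v = 0) (hv' : bisectorGap x y v' = 0)
    (hw : bisectorGap x' y' v = 0) (hw' : bisectorGap x' y' v' = 0) : v = v' := by
  have h₁ := bisectorGap_sub_bisectorGap x y v v'
  have h₂ := bisectorGap_sub_bisectorGap x' y' v v'
  rw [hv, hv', sub_zero, eq_comm, inner_eq_coord] at h₁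
  rw [hw, hw', sub_zero, eq_comm, inner_eq_coord] at h₂
  have hn : (y - x) 0 ≠ 0 := by simpa [sub_eq_zero] using hxy.symm
  have hn' : (y' - x') 0 ≠ 0 := by simpa [sub_eq_zero] using hxy'.symm
  have hcross : (y - x) 0 * (y' - x') 1 - (y - x) 1 * (y' - x') 0 ≠ 0 := by
    intro h
    apply hcot
    rw [orthCot, orthCot, div_eq_div_iff hn hn']
    linear_combination h
  have hd₁ : (v - v') 1 = 0 := by
    refine (mul_eq_zero.1 ?_).resolve_left hcross
    linear_combination (y - x) 0 * h₂ - (y' - x') 0 * h₁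
  have hd₀ : (v - v') 0 = 0 := by
    refine (mul_eq_zero.1 ?_).resolve_right hn
    linear_combination h₁ - (y - x) 1 * hd₁
  rw [← sub_eq_zero]
  ext i
  fin_cases i <;> simpa

def cotSet (γ : C → Plane) (s : Finset C) : Finset ℝ :=
  s.offDiag.image fun e => orthCot (γ e.2 - γ e.1)

theorem card_cotSet_le [DecidableEq C] (γ : C → Plane) (s : Finset C) :
    (cotSet γ s).card ≤ s.card.choose 2 :=
  card_image_offDiag_le_choose_two _ _ fun a b => orthCot_sub_comm (γ b) (γ a)

theorem orthCot_mem_cotSet {s : Finset C} {a b : C} (ha : a ∈ s) (hb : b ∈ s) (hab : a ≠ b) :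
    orthCot (γ b - γ a) ∈ cotSet γ s :=
  Finset.mem_image.2 ⟨(a, b), Finset.mem_offDiag.2 ⟨ha, hb, hab⟩, rfl⟩

namespace BottomCorner

variable (B : BottomCorner γ σ) (B' : BottomCorner γ σ')

def lo : ℝ := orthCot (γ B.b₁ - γ B.a₁)

def hi : ℝ := orthCot (γ B.b₂ - γ B.a₂)

theorem lo_lt_hi : B.lo < B.hi := B.cot_lt

theorem eq_of_v_eq_of_lo_eq [Finite C] (hv : B.v = B'.v) (hlo : B.lo = B'.lo) : σ = σ' := by
  have hmin := lt_min B.lo_lt_hi (hlo ▸ B'.lo_lt_hi)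
  obtain ⟨x, hx, hx'⟩ : ∃ x, x ∈ Ioo B.lo B.hi ∧ x ∈ Ioo B'.lo B'.hi :=
    ⟨(B.lo + min B.hi B'.hi) / 2, ⟨by linarith, by linarith [min_le_left B.hi B'.hi]⟩,
      ⟨by linarith, by linarith [min_le_right B.hi B'.hi]⟩⟩
  obtain ⟨t, ht, ht'⟩ := ((B.eventually_mem x hx).and (B'.eventually_mem x hx')).exists
  rw [hv] at ht
  exact eq_of_mem_region ht ht'

variable [DecidableEq C]

def pair₁ : Finset C := {B.a₁, B.b₁}

def pair₂ : Finset C := {B.a₂, B.b₂}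

def support : Finset C := B.pair₁ ∪ B.pair₂

theorem pair₁_ne_pair₂ : B.pair₁ ≠ B.pair₂ := fun h => B.cot_lt.ne (orthCot_eq_of_pair_eq h)

theorem a₁_mem_support : B.a₁ ∈ B.support := by simp [support, pair₁]

theorem lo_mem_cotSet : B.lo ∈ cotSet γ B.support :=
  orthCot_mem_cotSet (by simp [support, pair₁]) (by simp [support, pair₁]) B.ne₁

theorem hi_mem_cotSet : B.hi ∈ cotSet γ B.support :=
  orthCot_mem_cotSet (by simp [support, pair₂]) (by simp [support, pair₂]) B.ne₂

theorem card_support_of_disjoint (h : Disjoint B.pair₁ B.pair₂) : B.support.card = 4 := by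
  rw [support, Finset.card_union_of_disjoint h, pair₁, pair₂, Finset.card_pair B.ne₁,
    Finset.card_pair B.ne₂]

theorem card_support_of_not_disjoint (h : ¬Disjoint B.pair₁ B.pair₂) : B.support.card = 3 := by
  have h₁ : B.pair₁.card = 2 := Finset.card_pair B.ne₁
  have h₂ : B.pair₂.card = 2 := Finset.card_pair B.ne₂
  have hpos : 0 < (B.pair₁ ∩ B.pair₂).card :=
    Finset.card_pos.2 (Finset.not_disjoint_iff_nonempty_inter.1 h)
  have hlt : (B.pair₁ ∩ B.pair₂).card < 2 := by
    by_contra! h2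
    have e₁ := Finset.eq_of_subset_of_card_le Finset.inter_subset_left (h₁.trans_le h2)
    have e₂ := Finset.eq_of_subset_of_card_le Finset.inter_subset_right (h₂.trans_le h2)
    exact B.pair₁_ne_pair₂ (e₁.symm.trans e₂)
  have := Finset.card_union_add_card_inter B.pair₁ B.pair₂
  rw [support]
  omega

theorem dist_eq_of_mem_support (h : ¬Disjoint B.pair₁ B.pair₂) {p : C} (hp : p ∈ B.support) :
    dist B.v (γ p) = dist B.v (γ B.a₁) := by
  obtain ⟨c, hc₁, hc₂⟩ := Finset.not_disjoint_iff.1 h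
  have h₁ : ∀ q ∈ B.pair₁, dist B.v (γ q) = dist B.v (γ B.a₁) := by
    simp only [pair₁, Finset.mem_insert, Finset.mem_singleton]
    rintro q (rfl | rfl)
    · rfl
    · exact B.dist_eq₁.symm
  have h₂ : ∀ q ∈ B.pair₂, dist B.v (γ q) = dist B.v (γ B.a₂) := by
    simp only [pair₂, Finset.mem_insert, Finset.mem_singleton]
    rintro q (rfl | rfl)
    · rfl
    · exact B.dist_eq₂.symm
  rcases Finset.mem_union.1 hp with hp | hp
  · exact h₁ p hp
  · rw [h₂ p hp, ← h₂ c hc₂, h₁ c hc₁]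

theorem v_eq_of_support_eq (hγ : Injective γ) (h : ¬Disjoint B.pair₁ B.pair₂)
    (h' : ¬Disjoint B'.pair₁ B'.pair₂) (hs : B.support = B'.support) : B.v = B'.v := by
  obtain ⟨x, y, z, hxy, hxz, hyz, hxyz⟩ :=
    Finset.card_eq_three.1 (B.card_support_of_not_disjoint h)
  have hd : ∀ p ∈ B.support, dist (γ p) B.v = dist (γ B.a₁) B.v := fun p hp => by
    rw [dist_comm, B.dist_eq_of_mem_support h hp, dist_comm]
  have hd' : ∀ p ∈ B.support, dist (γ p) B'.v = dist (γ B'.a₁) B'.v := fun p hp => by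
    rw [dist_comm, B'.dist_eq_of_mem_support h' (hs ▸ hp), dist_comm]
  have hx : x ∈ B.support := by simp [hxyz]
  have hy : y ∈ B.support := by simp [hxyz]
  have hz : z ∈ B.support := by simp [hxyz]
  -- otherwise the circles about `B.v` and `B'.v` through the three points would meet thrice
  by_contra hv
  rcases EuclideanGeometry.eq_of_dist_eq_of_dist_eq_of_finrank_eq_two finrank_euclideanSpace_fin
    hv (hγ.ne hxy) (hd x hx) (hd y hy) (hd z hz) (hd' x hx) (hd' y hy) (hd' z hz) with h | h
  · exact hxz (hγ h).symm
  · exact hyz (hγ h).symm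

theorem eq_of_not_disjoint [Finite C] (hγ : Injective γ) (h : ¬Disjoint B.pair₁ B.pair₂)
    (h' : ¬Disjoint B'.pair₁ B'.pair₂) (hs : B.support = B'.support)
    (hmin : (∀ x ∈ cotSet γ B.support, B.lo ≤ x) ↔ ∀ x ∈ cotSet γ B'.support, B'.lo ≤ x) :
    σ = σ' := by
  refine B.eq_of_v_eq_of_lo_eq B' (B.v_eq_of_support_eq B' hγ h h' hs) ?_
  have hcard : (cotSet γ B.support).card ≤ 3 :=
    (card_cotSet_le _ _).trans (by rw [B.card_support_of_not_disjoint h]; rfl)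
  rw [← hs] at hmin
  exact eq_of_forall_le_iff_of_card_le_three hcard B.lo_mem_cotSet B.hi_mem_cotSet
    (hs ▸ B'.lo_mem_cotSet) (hs ▸ B'.hi_mem_cotSet) B.lo_lt_hi B'.lo_lt_hi hmin

end BottomCorner

section Tokens

variable [LinearOrder C]

namespace BottomCorner

variable (B : BottomCorner γ σ) (B' : BottomCorner γ σ')

def least : C := B.support.min' ⟨B.a₁, B.a₁_mem_support⟩

def partner : C :=
  if B.least = B.a₁ then B.b₁ else if B.least = B.b₁ then B.a₁
  else if B.least = B.a₂ then B.b₂ else B.a₂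

theorem pairs_eq_of_disjoint (h : Disjoint B.pair₁ B.pair₂) :
    B.pair₁ = {B.least, B.partner} ∧ B.pair₂ = B.support \ {B.least, B.partner} ∨
      B.pair₂ = {B.least, B.partner} ∧ B.pair₁ = B.support \ {B.least, B.partner} := by
  have h₁ : B.support \ B.pair₁ = B.pair₂ := Finset.union_sdiff_cancel_left h
  have h₂ : B.support \ B.pair₂ = B.pair₁ := Finset.union_sdiff_cancel_right h
  have hmem : B.least ∈ B.support := Finset.min'_mem _ _
  simp only [support, pair₁, pair₂, Finset.mem_union, Finset.mem_insert,
    Finset.mem_singleton] at hmem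
  unfold partner
  split_ifs with e₁ e₂ e₃
  · exact .inl ⟨by rw [e₁]; rfl, by rw [e₁]; exact h₁.symm⟩
  · exact .inl ⟨by rw [e₂, Finset.pair_comm]; rfl, by rw [e₂, Finset.pair_comm]; exact h₁.symm⟩
  · exact .inr ⟨by rw [e₃]; rfl, by rw [e₃]; exact h₂.symm⟩
  · have e₄ : B.least = B.b₂ := by tauto
    exact .inr ⟨by rw [e₄, Finset.pair_comm]; rfl, by rw [e₄, Finset.pair_comm]; exact h₂.symm⟩

theorem partner_mem_support (h : Disjoint B.pair₁ B.pair₂) : B.partner ∈ B.support := by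
  rcases B.pairs_eq_of_disjoint h with ⟨h₁, -⟩ | ⟨h₂, -⟩
  · exact Finset.mem_union_left _ (h₁ ▸ by simp)
  · exact Finset.mem_union_right _ (h₂ ▸ by simp)

theorem least_lt_partner (h : Disjoint B.pair₁ B.pair₂) : B.least < B.partner := by
  refine lt_of_le_of_ne (Finset.min'_le _ _ (B.partner_mem_support h) : B.least ≤ B.partner)
    fun heq => ?_
  have hcard₁ : B.pair₁.card = 2 := Finset.card_pair B.ne₁
  have hcard₂ : B.pair₂.card = 2 := Finset.card_pair B.ne₂
  rcases B.pairs_eq_of_disjoint h with ⟨h₁, -⟩ | ⟨h₂, -⟩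
  · rw [h₁, heq] at hcard₁
    simp at hcard₁
  · rw [h₂, heq] at hcard₂
    simp at hcard₂

theorem eq_of_disjoint [Finite C] (hγ₀ : Injective fun a => γ a 0) (h : Disjoint B.pair₁ B.pair₂)
    (h' : Disjoint B'.pair₁ B'.pair₂) (hs : B.support = B'.support)
    (hz : B.partner = B'.partner) : σ = σ' := by
  have hl : B.least = B'.least := by simp only [least, hs]
  have hpairs : B.pair₁ = B'.pair₁ ∧ B.pair₂ = B'.pair₂ ∨
      B.pair₁ = B'.pair₂ ∧ B.pair₂ = B'.pair₁ := by
    rcases B.pairs_eq_of_disjoint h with ⟨h₁, h₂⟩ | ⟨h₁, h₂⟩ <;>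
    rcases B'.pairs_eq_of_disjoint h' with ⟨h₁', h₂'⟩ | ⟨h₁', h₂'⟩ <;>
    rw [hl, hz] at h₁ <;> rw [hs, hl, hz] at h₂ <;>
    simp only [h₁, h₂, h₁', h₂', and_self, true_or, or_true]
  rcases hpairs with ⟨h₁, h₂⟩ | ⟨h₁, h₂⟩
  · have hv : B.v = B'.v := eq_of_bisectorGap_eq_zero (hγ₀.ne B.ne₁) (hγ₀.ne B.ne₂)
      B.lo_lt_hi.ne ((bisectorGap_eq_zero_iff _ _).2 B.dist_eq₁)
      ((bisectorGap_eq_zero_iff _ _).2 (dist_eq_of_pair_eq h₁.symm B'.dist_eq₁))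
      ((bisectorGap_eq_zero_iff _ _).2 B.dist_eq₂)
      ((bisectorGap_eq_zero_iff _ _).2 (dist_eq_of_pair_eq h₂.symm B'.dist_eq₂))
    exact B.eq_of_v_eq_of_lo_eq B' hv (orthCot_eq_of_pair_eq h₁)
  · have h₁' : B.lo = B'.hi := orthCot_eq_of_pair_eq h₁
    have h₂' : B.hi = B'.lo := orthCot_eq_of_pair_eq h₂
    linarith [B.lo_lt_hi, B'.lo_lt_hi]

/-- What determines the region of a corner: if its two bisectors share a candidate, the three
candidates and whether `lo` is their least cotangent; otherwise the four candidates and how the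
two bisectors pair them up, recorded as the partner of the least one. -/
def token : (Finset C × Bool) ⊕ (Σ _ : Finset C, C) :=
  if Disjoint B.pair₁ B.pair₂ then .inr ⟨B.support, B.partner⟩
  else .inl (B.support, decide (∀ x ∈ cotSet γ B.support, B.lo ≤ x))

theorem eq_of_token_eq [Finite C] (hγ₀ : Injective fun a => γ a 0) (h : B.token = B'.token) :
    σ = σ' := by
  have hγ : Injective γ := fun a b hab => hγ₀ (congrArg (· 0) hab)
  unfold token at h
  split_ifs at h with h₁ h₂ h₂
  · simp only [Sum.inr.injEq, Sigma.mk.injEq, heq_eq_eq] at h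
    exact B.eq_of_disjoint B' hγ₀ h₁ h₂ h.1 h.2
  · simp only [Sum.inl.injEq, Prod.mk.injEq, decide_eq_decide] at h
    exact B.eq_of_not_disjoint B' hγ h₁ h₂ h.1 h.2

end BottomCorner

variable (C) in
def cornerTokens [Fintype C] : Finset ((Finset C × Bool) ⊕ (Σ _ : Finset C, C)) :=
  (Finset.univ.powersetCard 3 ×ˢ Finset.univ).disjSum
    ((Finset.univ.powersetCard 4).sigma fun U : Finset C => U.filter fun z => ∃ y ∈ U, y < z)

theorem card_cornerTokens [Fintype C] :
    (cornerTokens C).card = 2 * (Fintype.card C).choose 3 + 3 * (Fintype.card C).choose 4 := by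
  have hthree : ∀ U ∈ (Finset.univ : Finset C).powersetCard 4,
      (U.filter fun z => ∃ y ∈ U, y < z).card = 3 := by
    intro U hU
    have hU : U.card = 4 := (Finset.mem_powersetCard.1 hU).2
    have hne : U.Nonempty := Finset.card_pos.1 (by omega)
    have : U.filter (fun z => ∃ y ∈ U, y < z) = U.erase (U.min' hne) := by
      ext z
      simp only [Finset.mem_filter, Finset.mem_erase]
      constructor
      · rintro ⟨hz, y, hy, hyz⟩
        exact ⟨((U.min'_le y hy).trans_lt hyz).ne', hz⟩
      · rintro ⟨hne', hz⟩
        exact ⟨hz, _, U.min'_mem hne, (U.min'_le z hz).lt_of_ne hne'.symm⟩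
    rw [this, Finset.card_erase_of_mem (U.min'_mem hne), hU]
  rw [cornerTokens, Finset.card_disjSum, Finset.card_product, Finset.card_sigma,
    Finset.sum_const_nat hthree, Finset.card_powersetCard, Finset.card_powersetCard,
    Finset.card_univ, Finset.card_univ, Fintype.card_bool]
  ring

theorem BottomCorner.token_mem [Fintype C] (B : BottomCorner γ σ) : B.token ∈ cornerTokens C := by
  unfold BottomCorner.token
  split_ifs with h
  · exact Finset.inr_mem_disjSum.2 (Finset.mem_sigma.2
      ⟨Finset.mem_powersetCard_univ.2 (B.card_support_of_disjoint h), Finset.mem_filter.2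
        ⟨B.partner_mem_support h, B.least, Finset.min'_mem _ _, B.least_lt_partner h⟩⟩)
  · exact Finset.inl_mem_disjSum.2 (Finset.mem_product.2
      ⟨Finset.mem_powersetCard_univ.2 (B.card_support_of_not_disjoint h), Finset.mem_univ _⟩)

theorem ncard_bddBelow_le [Fintype C] (hγ₀ : Injective fun a => γ a 0) :
    {σ : C ≃ Fin m | (region γ σ).Nonempty ∧ BddBelow ((· 1) '' region γ σ)}.ncard ≤
      2 * (Fintype.card C).choose 3 + 3 * (Fintype.card C).choose 4 := by
  classical
  set A := {σ : C ≃ Fin m | (region γ σ).Nonempty ∧ BddBelow ((· 1) '' region γ σ)}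
  have hA : ∀ σ ∈ A, Nonempty (BottomCorner γ σ) := fun σ hσ =>
    nonempty_bottomCorner hγ₀ hσ.1 hσ.2
  let tok : (C ≃ Fin m) → (Finset C × Bool) ⊕ (Σ _ : Finset C, C) := fun σ =>
    if h : σ ∈ A then (hA σ h).some.token else .inl (∅, false)
  calc A.ncard ≤ (cornerTokens C : Set _).ncard :=
        ncard_le_ncard_of_injOn tok (fun σ hσ => by simpa [tok, hσ] using (hA σ hσ).some.token_mem)
          (fun σ hσ σ' hσ' h => by
            simp only [tok, dif_pos hσ, dif_pos hσ'] at h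
            exact BottomCorner.eq_of_token_eq _ _ hγ₀ h)
    _ = _ := by rw [ncard_coe_finset, card_cornerTokens]

end Tokens

end Corners

theorem ncard_nonempty_region_le {C : Type*} [Fintype C] [LinearOrder C] {m : ℕ} {γ : C → Plane}
    (hγ₀ : Injective fun a => γ a 0) :
    {σ : C ≃ Fin m | (region γ σ).Nonempty}.ncard ≤
      2 * (Fintype.card C).choose 3 + 3 * (Fintype.card C).choose 4 +
        ((Fintype.card C).choose 2 + 1) := by
  calc {σ : C ≃ Fin m | (region γ σ).Nonempty}.ncard
      ≤ ({σ : C ≃ Fin m | (region γ σ).Nonempty ∧ BddBelow ((· 1) '' region γ σ)} ∪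
          {σ | (region γ σ).Nonempty ∧ ¬BddBelow ((· 1) '' region γ σ)}).ncard :=
        ncard_le_ncard (fun σ hσ => (em _).imp (⟨hσ, ·⟩) (⟨hσ, ·⟩))
    _ ≤ _ := ncard_union_le _ _
    _ ≤ _ := add_le_add (ncard_bddBelow_le hγ₀) (ncard_not_bddBelow_le hγ₀)

theorem cast_choose_two_three_four (n : ℕ) :
    (n.choose 2 : ℚ) = n * (n - 1) / 2 ∧ (n.choose 3 : ℚ) = n * (n - 1) * (n - 2) / 6 ∧
      (n.choose 4 : ℚ) = n * (n - 1) * (n - 2) * (n - 3) / 24 := by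
  refine ⟨?_, ?_, ?_⟩ <;>
  simp only [Nat.cast_choose_eq_descPochhammer_div, descPochhammer_succ_right,
    descPochhammer_zero, Polynomial.eval_mul, Polynomial.eval_X, Polynomial.eval_sub,
    Polynomial.eval_natCast, Polynomial.eval_ofNat, Polynomial.eval_one, Nat.factorial,
    Nat.cast_ofNat] <;>
  push_cast <;> ring

theorem bound_eq_choose (n : ℕ) :
    (n : ℤ) * (3 * n - 10) * (n + 1) * (n - 1) / 24 + n * (n - 1) + 1 =
      2 * n.choose 3 + 3 * n.choose 4 + (n.choose 2 + 1) := by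
  obtain ⟨h₂, h₃, h₄⟩ := cast_choose_two_three_four n
  have hquartic : (n : ℤ) * (3 * n - 10) * (n + 1) * (n - 1) =
      24 * (2 * n.choose 3 + 3 * n.choose 4 - n.choose 2) := by
    qify
    rw [h₂, h₃, h₄]
    ring
  have hquadratic : (n : ℤ) * (n - 1) = 2 * n.choose 2 := by
    qify
    rw [h₂]
    ring
  rw [hquartic, Int.mul_ediv_cancel_left _ (by norm_num), hquadratic]
  ring

end RankingRegion

open RankingRegion in
/-- for an embedding of `m` candidates in the plane, the number of linear
orders with nonempty region is at most `m(3m−10)(m+1)(m−1)/24 + m(m−1) + 1`. -/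
theorem stmt_8 {C : Type*} [Fintype C] (γ : C → Plane) (hγ : Function.Injective γ) :
    (Set.ncard {σ : C ≃ Fin (Fintype.card C) | (region γ σ).Nonempty} : ℤ) ≤
      (Fintype.card C : ℤ) * (3 * (Fintype.card C : ℤ) - 10) * ((Fintype.card C : ℤ) + 1)
          * ((Fintype.card C : ℤ) - 1) / 24
        + (Fintype.card C : ℤ) * ((Fintype.card C : ℤ) - 1) + 1 := by
  let : LinearOrder C := LinearOrder.lift' _ (Fintype.equivFin C).injective
  obtain ⟨e, he⟩ := exists_linearIsometryEquiv_injective_coord hγ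
  have hcount := ncard_nonempty_region_le (m := Fintype.card C) (γ := e ∘ γ) he
  simp only [← LinearIsometryEquiv.coe_toIsometryEquiv,
    nonempty_region_comp_iff e.toIsometryEquiv] at hcount
  rw [bound_eq_choose]
  exact_mod_cast hcount
end
end

section
/- Any election with at most 3 candidates is 2-Euclidean. More specifically, placing the three candidates at the vertices of a non-degenerate (non-equilateral, scalene) triangle yields an embedding in which all 6 regions corresponding to the 6 linear orders of the candidates are nonempty. -/
noncomputable section

/-!
Put the candidates at affinely independent points, as the vertices of a triangle are. The squared
distances from a point `p` to such points can then be prescribed arbitrarily up to a common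
additive constant: the conditions are linear equations in `p` with linearly independent
coefficient vectors `x i - x i₀`. Prescribing squared distances that increase along a ranking
exhibits a point of its region. Regions are open, so every nonempty one holds as many voters as
needed, at distinct points.
-/

open RealInnerProductSpace Module

theorem exists_inner_eq_of_linearIndependent {ι E : Type*} [Finite ι] [NormedAddCommGroup E]
    [InnerProductSpace ℝ E] {u : ι → E} (hu : LinearIndependent ℝ u) (s : ι → ℝ) :
    ∃ p : E, ∀ i, ⟪p, u i⟫ = s i := by
  -- Riesz representative, inside the span of `u`, of the functional with values `s` on `u`
  let b := Basis.span hu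
  have : FiniteDimensional ℝ (Submodule.span ℝ (Set.range u)) := .of_basis b
  let φ := LinearMap.toContinuousLinearMap (b.constr ℝ s)
  refine ⟨(InnerProductSpace.toDual ℝ (Submodule.span ℝ (Set.range u))).symm φ, fun i => ?_⟩
  have := InnerProductSpace.toDual_symm_apply (x := b i) (y := φ)
  rwa [Submodule.coe_inner, LinearMap.coe_toContinuousLinearMap', Basis.constr_basis,
    Basis.span_apply] at this

theorem AffineIndependent.exists_dist_sq_eq_add_const {ι E : Type*} [Finite ι]
    [NormedAddCommGroup E] [InnerProductSpace ℝ E] {x : ι → E} (hx : AffineIndependent ℝ x)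
    (d : ι → ℝ) : ∃ p : E, ∃ c : ℝ, ∀ i, dist p (x i) ^ 2 = d i + c := by
  rcases isEmpty_or_nonempty ι with hι | ⟨⟨i₀⟩⟩
  · exact ⟨0, 0, isEmptyElim⟩
  obtain ⟨p, hp⟩ := exists_inner_eq_of_linearIndependent
    ((affineIndependent_iff_linearIndependent_vsub ℝ x i₀).1 hx)
    (fun i => (‖x i‖ ^ 2 - ‖x i₀‖ ^ 2 - d i + d i₀) / 2)
  have hinner : ∀ i, 2 * ⟪p, x i - x i₀⟫ = ‖x i‖ ^ 2 - ‖x i₀‖ ^ 2 - d i + d i₀ := by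
    intro i
    by_cases hi : i = i₀
    · subst hi
      simp
    · have := hp ⟨i, hi⟩
      rw [vsub_eq_sub] at this
      linarith
  -- `‖p - x i‖² - ‖p - x i₀‖²` is an affine function of `p` with linear part `-2 ⟪·, x i - x i₀⟫`
  refine ⟨p, dist p (x i₀) ^ 2 - d i₀, fun i => ?_⟩
  have := hinner i
  rw [inner_sub_right] at this
  rw [dist_eq_norm, dist_eq_norm, norm_sub_sq_real, norm_sub_sq_real]
  linarith

theorem exists_affineIndependent_of_card_le {ι k V P : Type*} [Fintype ι] [DivisionRing k]
    [AddCommGroup V] [Module k V] [AddTorsor V P] [FiniteDimensional k V]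
    (h : Fintype.card ι ≤ finrank k V + 1) : ∃ γ : ι → P, AffineIndependent k γ := by
  obtain ⟨b⟩ := AffineBasis.exists_affineBasis_of_finiteDimensional
    (ι := Fin (finrank k V + 1)) (k := k) (P := P) (Fintype.card_fin _)
  obtain ⟨e⟩ := Function.Embedding.nonempty_of_card_le (h.trans_eq (Fintype.card_fin _).symm)
  exact ⟨b ∘ e, b.ind.comp_embedding e⟩

theorem exists_forall_lt_of_isStrictOrder {C : Type*} [Finite C] (r : C → C → Prop)
    [IsStrictOrder C r] : ∃ f : C → ℝ, ∀ a b, r a b → f a < f b := by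
  refine ⟨fun a => {c | r c a}.ncard, fun a b hab => ?_⟩
  have : {c | r c a} ⊂ {c | r c b} :=
    ⟨fun c hc => _root_.trans_of r hc hab, fun h => irrefl_of r a (h hab)⟩
  exact Nat.cast_lt.2 (Set.ncard_lt_ncard this)

theorem exists_injective_forall_mem_of_infinite {V X : Type*} [Finite V] {S : V → Set X}
    (hS : ∀ v, (S v).Infinite) : ∃ f : V → X, Function.Injective f ∧ ∀ v, f v ∈ S v := by
  classical
  cases nonempty_fintype V
  have key : ∀ s : Finset V, ∃ f : V → X, Set.InjOn f s ∧ ∀ v ∈ s, f v ∈ S v := by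
    intro s
    induction s using Finset.induction_on with
    | empty => exact ⟨fun v => (hS v).nonempty.some, by simp, by simp⟩
    | insert a s ha ih =>
      obtain ⟨f, hinj, hmem⟩ := ih
      obtain ⟨x, hxS, hxf⟩ := ((hS a).sdiff (s.finite_toSet.image f)).nonempty
      have heq : Set.EqOn (Function.update f a x) f s := fun v hv =>
        Function.update_of_ne (ne_of_mem_of_not_mem (Finset.mem_coe.1 hv) ha) _ _
      refine ⟨Function.update f a x, ?_, fun v hv => ?_⟩
      · rw [Finset.coe_insert, Set.injOn_insert (by simpa using ha), heq.image_eq,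
          Function.update_self]
        exact ⟨hinj.congr heq.symm, hxf⟩
      · rcases Finset.mem_insert.1 hv with rfl | hv
        · simpa using hxS
        · rw [heq hv]
          exact hmem v hv
  obtain ⟨f, hinj, hmem⟩ := key Finset.univ
  exact ⟨f, Set.injOn_univ.1 (by simpa using hinj),
    fun v => hmem v (Finset.mem_univ v)⟩

def prefRegion {C E : Type*} [Dist E] (γ : C → E) (r : C → C → Prop) : Set E :=
  {p | ∀ a b, r a b → dist p (γ a) < dist p (γ b)}

theorem isOpen_prefRegion {C E : Type*} [Finite C] [PseudoMetricSpace E] (γ : C → E)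
    (r : C → C → Prop) : IsOpen (prefRegion γ r) := by
  have : prefRegion γ r = ⋂ (a) (b) (_ : r a b), {p | dist p (γ a) < dist p (γ b)} := by
    ext
    simp [prefRegion]
  rw [this]
  exact isOpen_iInter_of_finite fun a => isOpen_iInter_of_finite fun b =>
    isOpen_iInter_of_finite fun _ =>
      isOpen_lt (continuous_id.dist continuous_const) (continuous_id.dist continuous_const)

theorem prefRegion_nonempty_of_affineIndependent {C E : Type*} [Finite C] [NormedAddCommGroup E]
    [InnerProductSpace ℝ E] {γ : C → E} (hγ : AffineIndependent ℝ γ) {r : C → C → Prop}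
    {f : C → ℝ} (hf : ∀ a b, r a b → f a < f b) : (prefRegion γ r).Nonempty := by
  obtain ⟨p, c, hp⟩ := hγ.exists_dist_sq_eq_add_const f
  exact ⟨p, fun a b hab =>
    lt_of_pow_lt_pow_left₀ 2 dist_nonneg (by rw [hp, hp]; linarith [hf a b hab])⟩

theorem isEuclidean2_of_forall_prefRegion_nonempty {C V : Type*} [Finite C] [Finite V]
    (pref : V → C → C → Prop) {γ : C → Plane} (hγ : Function.Injective γ)
    (h : ∀ v, (prefRegion γ (pref v)).Nonempty) : IsEuclidean2 pref := by
  -- regions are open, hence infinite, so distinct voters fit in them away from the candidates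
  have hinf : ∀ v, (prefRegion γ (pref v) \ Set.range γ).Infinite := fun v =>
    have ⟨p, hp⟩ := h v
    (infinite_of_mem_nhds p ((isOpen_prefRegion γ (pref v)).mem_nhds hp)).sdiff
      (Set.finite_range γ)
  obtain ⟨f, hf, hfS⟩ := exists_injective_forall_mem_of_infinite hinf
  exact ⟨Sum.elim γ f, hγ.sumElim hf fun a v h => (hfS v).2 ⟨a, h⟩, fun v => (hfS v).1⟩

theorem isEuclidean2_of_card_le_three {C V : Type*} [Fintype C] [Finite V]
    (pref : V → C → C → Prop) (hord : ∀ v, IsStrictOrder C (pref v))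
    (hcard : Fintype.card C ≤ 3) : IsEuclidean2 pref := by
  obtain ⟨γ, hγ⟩ := exists_affineIndependent_of_card_le (k := ℝ) (V := Plane) (P := Plane)
    (by simpa using hcard)
  refine isEuclidean2_of_forall_prefRegion_nonempty pref hγ.injective fun v => ?_
  have := hord v
  obtain ⟨f, hf⟩ := exists_forall_lt_of_isStrictOrder (pref v)
  exact prefRegion_nonempty_of_affineIndependent hγ hf

theorem region_nonempty_of_not_collinear {C : Type*} {γ : C → Plane}
    (hγ : ¬ Collinear ℝ (Set.range γ)) (σ : C ≃ Fin 3) : (region γ σ).Nonempty := by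
  have : Finite C := .of_equiv _ σ.symm
  rw [← σ.symm.surjective.range_comp, ← affineIndependent_iff_not_collinear,
    affineIndependent_equiv] at hγ
  exact prefRegion_nonempty_of_affineIndependent (f := fun a => (σ a : ℝ)) hγ
    fun a b hab => Nat.cast_lt.2 hab

/-- any election with at most 3 candidates is 2-Euclidean; moreover, when
there are exactly 3 candidates, any embedding of them at the vertices of a non-degenerate
(non-collinear) scalene triangle (all pairwise distances between distinct pairs are
different) makes all `6 = 3!` regions nonempty. -/
theorem stmt_9 {C V : Type*} [Fintype C] [Fintype V]
    (pref : V → C → C → Prop) (hord : ∀ v : V, IsStrictTotalOrder C (pref v))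
    (hcard : Fintype.card C ≤ 3) :
    IsEuclidean2 pref ∧
    (Fintype.card C = 3 → ∀ γ : C → Plane, Function.Injective γ →
      ¬ Collinear ℝ (Set.range γ) →
      (∀ a b c d : C, a ≠ b → c ≠ d → ({a, b} : Set C) ≠ ({c, d} : Set C) →
        dist (γ a) (γ b) ≠ dist (γ c) (γ d)) →
      ∀ σ : C ≃ Fin 3, (region γ σ).Nonempty) :=
  ⟨isEuclidean2_of_card_le_three pref (fun v => (hord v).toIsStrictOrder) hcard,
    fun _ _ _ hγ _ σ => region_nonempty_of_not_collinear hγ σ⟩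
end
end

section
/- Let γ be an embedding of candidates in ℝ². Two distinct linear orders u and v on C have adjacent regions in the arrangement of bisectors (i.e., the closures of the nonempty regions R_γ(u) and R_γ(v) share a one-dimensional boundary piece lying on a single bisector) only if u and v differ by a single swap of two candidates that are consecutive in both orders; equivalently, their Kendall tau (swap) distance is 1. -/
noncomputable section

/-- The swap (Kendall tau) distance between two rankings: the number of discordant pairs. -/
def kendall {C : Type*} {m : ℕ} (u v : C ≃ Fin m) : ℕ :=
  Set.ncard {p : C × C | u p.1 < u p.2 ∧ v p.2 < v p.1}

/-- if the closures of two nonempty regions share a one-dimensional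
boundary piece (a nondegenerate segment) lying on a single bisector, then the two orders
differ by one swap of consecutive candidates, i.e., their swap distance is 1. -/
theorem stmt_10 {C : Type*} [Fintype C] (γ : C → Plane) (hγ : Function.Injective γ)
    (u v : C ≃ Fin (Fintype.card C)) (huv : u ≠ v)
    (hu : (region γ u).Nonempty) (hv : (region γ v).Nonempty)
    (a b : C) (hab : a ≠ b) (p q : Plane) (hpq : p ≠ q)
    (hseg : segment ℝ p q ⊆ closure (region γ u) ∩ closure (region γ v))
    (hbis : segment ℝ p q ⊆ {x : Plane | dist x (γ a) = dist x (γ b)})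
    (honly : ∀ c d : C, c ≠ d → ({c, d} : Set C) ≠ ({a, b} : Set C) →
      ¬ segment ℝ p q ⊆ {x : Plane | dist x (γ c) = dist x (γ d)}) :
    kendall u v = 1 := by
  -- From closure membership: weak inequalities.
  have hle : ∀ (w : C ≃ Fin (Fintype.card C)), segment ℝ p q ⊆ closure (region γ w) →
      ∀ x ∈ segment ℝ p q, ∀ c d : C, w c < w d → dist x (γ c) ≤ dist x (γ d) := by
    intro w hw x hx c d hcd
    have hclosed : IsClosed {y : Plane | dist y (γ c) ≤ dist y (γ d)} :=
      isClosed_le (continuous_id.dist continuous_const) (continuous_id.dist continuous_const)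
    have hsub : region γ w ⊆ {y : Plane | dist y (γ c) ≤ dist y (γ d)} := by
      intro y hy; exact le_of_lt (hy c d hcd)
    exact closure_minimal hsub hclosed (hw hx)
  have hleu := hle u (fun x hx => (hseg hx).1)
  have hlev := hle v (fun x hx => (hseg hx).2)
  -- Agreement on all pairs other than {a,b}.
  have hagree : ∀ c d : C, ({c, d} : Set C) ≠ ({a, b} : Set C) → (u c < u d ↔ v c < v d) := by
    intro c d hcd
    rcases eq_or_ne c d with rfl | hne
    · simp
    obtain ⟨x, hx, hxne⟩ : ∃ x ∈ segment ℝ p q, dist x (γ c) ≠ dist x (γ d) := by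
      obtain ⟨x, hx1, hx2⟩ := Set.not_subset.mp (honly c d hne hcd)
      exact ⟨x, hx1, hx2⟩
    constructor
    · intro h
      have h1 : dist x (γ c) ≤ dist x (γ d) := hleu x hx c d h
      by_contra hvc
      have : v d < v c := by
        rcases lt_trichotomy (v c) (v d) with h' | h' | h'
        · exact absurd h' hvc
        · exact absurd (v.injective (Fin.val_injective (by exact_mod_cast congrArg Fin.val h'))) hne
        · exact h'
      have h2 : dist x (γ d) ≤ dist x (γ c) := hlev x hx d c this
      exact hxne (le_antisymm h1 h2)
    · intro h
      have h1 : dist x (γ c) ≤ dist x (γ d) := hlev x hx c d h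
      by_contra huc
      have : u d < u c := by
        rcases lt_trichotomy (u c) (u d) with h' | h' | h'
        · exact absurd h' huc
        · exact absurd (u.injective h') hne
        · exact h'
      have h2 : dist x (γ d) ≤ dist x (γ c) := hleu x hx d c this
      exact hxne (le_antisymm h1 h2)
  -- If u and v agreed on (a,b) too, they'd be equal.
  have hdisagree : ¬ (u a < u b ↔ v a < v b) := by
    intro hiff
    have hall : ∀ c d : C, u c < u d ↔ v c < v d := by
      intro c d
      by_cases hcd : ({c, d} : Set C) = ({a, b} : Set C)
      · rcases Set.pair_eq_pair_iff.mp hcd with ⟨rfl, rfl⟩ | ⟨rfl, rfl⟩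
        · exact hiff
        · constructor
          · intro h
            rcases lt_trichotomy (v c) (v d) with h' | h' | h'
            · exact h'
            · exact absurd (v.injective h') (fun e => hab e.symm)
            · exact absurd (hiff.mpr h') (not_lt.mpr (le_of_lt h))
          · intro h
            rcases lt_trichotomy (u c) (u d) with h' | h' | h'
            · exact h'
            · exact absurd (u.injective h') (fun e => hab e.symm)
            · exact absurd (hiff.mp h') (not_lt.mpr (le_of_lt h))
      · exact hagree c d hcd
    -- Conclude u = v.
    apply huv
    have hmono : StrictMono (fun i => v (u.symm i)) := by
      intro i j hij
      have : u (u.symm i) < u (u.symm j) := by simpa using hij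
      exact (hall _ _).mp this
    have hrange : Set.range (fun i => v (u.symm i)) = Set.range (id : Fin (Fintype.card C) → Fin (Fintype.card C)) := by
      simp [Set.range_id, Set.range_comp, (v.surjective.comp u.symm.surjective).range_eq]
      exact (v.surjective.comp u.symm.surjective).range_eq
    haveI : WellFoundedLT (Fin (Fintype.card C)) := Finite.to_wellFoundedLT
    have hid : (fun i => v (u.symm i)) = id := (hmono.range_inj (strictMono_id (α := Fin (Fintype.card C)))).mp hrange
    ext c
    have h2 : v c = u c := by simpa using congrFun hid (u c)
    exact congrArg Fin.val h2.symm
  -- The discordant set is a singleton.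
  have hone : (u a < u b ∧ v b < v a) ∨ (u b < u a ∧ v a < v b) := by
    have hab' : u a ≠ u b := fun e => hab (u.injective e)
    have hab'' : v a ≠ v b := fun e => hab (v.injective e)
    rcases lt_or_gt_of_ne hab' with h1 | h1 <;> rcases lt_or_gt_of_ne hab'' with h2 | h2
    · exact absurd (iff_of_true h1 h2) hdisagree
    · exact Or.inl ⟨h1, h2⟩
    · exact Or.inr ⟨h1, h2⟩
    · exact absurd (iff_of_false (not_lt.mpr (le_of_lt h1)) (not_lt.mpr (le_of_lt h2))) hdisagree
  have key : ∀ c d : C, (u c < u d ∧ v d < v c) → ({c, d} : Set C) = ({a, b} : Set C) := by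
    intro c d ⟨h1, h2⟩
    by_contra hcd
    exact (not_lt.mpr (le_of_lt h2)) ((hagree c d hcd).mp h1)
  unfold kendall
  rcases hone with ⟨h1, h2⟩ | ⟨h1, h2⟩
  · have : {p : C × C | u p.1 < u p.2 ∧ v p.2 < v p.1} = {(a, b)} := by
      ext ⟨c, d⟩
      simp only [Set.mem_setOf_eq, Set.mem_singleton_iff, Prod.mk.injEq]
      constructor
      · intro ⟨hc1, hc2⟩
        rcases Set.pair_eq_pair_iff.mp (key c d ⟨hc1, hc2⟩) with ⟨rfl, rfl⟩ | ⟨rfl, rfl⟩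
        · exact ⟨rfl, rfl⟩
        · exact absurd hc1 (not_lt.mpr (le_of_lt h1))
      · rintro ⟨rfl, rfl⟩; exact ⟨h1, h2⟩
    rw [this, Set.ncard_singleton]
  · have : {p : C × C | u p.1 < u p.2 ∧ v p.2 < v p.1} = {(b, a)} := by
      ext ⟨c, d⟩
      simp only [Set.mem_setOf_eq, Set.mem_singleton_iff, Prod.mk.injEq]
      constructor
      · intro ⟨hc1, hc2⟩
        rcases Set.pair_eq_pair_iff.mp (key c d ⟨hc1, hc2⟩) with ⟨rfl, rfl⟩ | ⟨rfl, rfl⟩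
        · exact absurd hc1 (not_lt.mpr (le_of_lt h1))
        · exact ⟨rfl, rfl⟩
      · rintro ⟨rfl, rfl⟩; exact ⟨h1, h2⟩
    rw [this, Set.ncard_singleton]
end
end

section
/- The embedding graph D_γ of a nice embedding γ of candidates (the weak dual of the plane graph induced by the bisector arrangement clipped by a large circle) is a distance-preserving subgraph of the permutation graph G(S_C): for any two vertices u,v of D_γ (linear orders with nonempty regions), the graph distance between u and v in D_γ equals their swap (Kendall tau) distance. -/
/-!
Swap distance is a metric and adjacent vertices are at swap distance one, so it bounds the graph
distance from below. Conversely, walk in a straight line from a point `p` of the region of `u`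
to a point `q` of the region of `v`, chosen off the countably many lines joining `p` to a
crossing point of two bisectors. Then the segment meets the bisectors of the pairs discordant
for `u` and `v` one at a time, and it meets no other bisector. Just past the first crossing the
point lies in the region of a ranking `w` that differs from `u` in that single pair, so
`kendall u w = 1` and `kendall w v = kendall u v - 1`. Induction on `kendall u v` then yields a
walk of that length.
-/

noncomputable section

/-- The embedding graph of `γ`: vertices are the rankings with nonempty region, with an
edge between two rankings at swap distance 1 (this is exactly adjacency of regions in the
bisector arrangement). -/
def embeddingGraph {C : Type*} [Fintype C] (γ : C → Plane) :
    SimpleGraph {σ : C ≃ Fin (Fintype.card C) // (region γ σ).Nonempty} :=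
  SimpleGraph.fromRel (fun x y => kendall x.1 y.1 = 1)

open Module RealInnerProductSpace MeasureTheory Filter Topology

section Kendall

variable {C : Type*} {m : ℕ}

lemma kendall_self (u : C ≃ Fin m) : kendall u u = 0 := by
  have hdisc : {p : C × C | u p.1 < u p.2 ∧ u p.2 < u p.1} = ∅ :=
    Set.eq_empty_of_forall_notMem fun p hp => hp.1.asymm hp.2
  rw [kendall, hdisc, Set.ncard_empty]

lemma kendall_comm (u v : C ≃ Fin m) : kendall u v = kendall v u := by
  rw [kendall, kendall, ← Set.ncard_image_of_injective _ Prod.swap_injective]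
  congr 1
  ext ⟨a, b⟩
  simp [and_comm]

lemma kendall_le_kendall_add_kendall [Finite C] (u w v : C ≃ Fin m) :
    kendall u v ≤ kendall u w + kendall w v := by
  refine (Set.ncard_le_ncard ?_ (Set.toFinite _)).trans (Set.ncard_union_le _ _)
  rintro ⟨a, b⟩ ⟨hu, hv⟩
  have hab : a ≠ b := fun h => hu.ne (congrArg u h)
  rcases (w.injective.ne hab).lt_or_gt with hw | hw
  · exact Or.inr ⟨hw, hv⟩
  · exact Or.inl ⟨hu, hw⟩

lemma eq_of_kendall_eq_zero [Finite C] {u v : C ≃ Fin m} (h : kendall u v = 0) : u = v := by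
  rw [kendall, Set.ncard_eq_zero] at h
  have hmono : StrictMono (v ∘ u.symm) := fun i j hij => by
    by_contra hvji
    have hne : v (u.symm j) ≠ v (u.symm i) := by simpa using hij.ne'
    have hdisc : (u.symm i, u.symm j) ∈ {p : C × C | u p.1 < u p.2 ∧ v p.2 < v p.1} :=
      ⟨by simpa using hij, lt_of_le_of_ne (not_lt.mp hvji) hne⟩
    simp [h] at hdisc
  have hid : v ∘ u.symm = id := (hmono.range_inj strictMono_id).mp <| by
    rw [Set.range_id, (v.surjective.comp u.symm.surjective).range_eq]
  exact (Equiv.ext fun a => by simpa using congrFun hid (u a)).symm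

section Flip

variable {u w v : C ≃ Fin m} {a b : C}

lemma kendall_eq_one_of_flip (hab : u a < u b) (hba : w b < w a)
    (hflip : ∀ c d, u c < u d → (c, d) ≠ (a, b) → w c < w d) : kendall u w = 1 := by
  rw [kendall, Set.ncard_eq_one]
  refine ⟨(a, b), Set.eq_singleton_iff_unique_mem.2 ⟨⟨hab, hba⟩, ?_⟩⟩
  rintro ⟨c, d⟩ ⟨hcd, hdc⟩
  by_contra hne
  exact (hflip c d hcd hne).asymm hdc

lemma kendall_add_one_of_flip [Finite C] (hab : u a < u b) (hba : w b < w a)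
    (hflip : ∀ c d, u c < u d → (c, d) ≠ (a, b) → w c < w d) (hv : v b < v a) :
    kendall w v + 1 = kendall u v := by
  have hdisc : {p : C × C | w p.1 < w p.2 ∧ v p.2 < v p.1} =
      {p : C × C | u p.1 < u p.2 ∧ v p.2 < v p.1} \ {(a, b)} := by
    ext ⟨c, d⟩
    simp only [Set.mem_sdiff, Set.mem_ofPred_eq, Set.mem_singleton_iff]
    constructor
    · rintro ⟨hwcd, hvdc⟩
      have hcd : c ≠ d := by rintro rfl; exact lt_irrefl _ hwcd
      have hucd : u c < u d := by
        refine (u.injective.ne hcd).lt_or_gt.resolve_right fun hudc => ?_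
        by_cases hdc : (d, c) = (a, b)
        · obtain ⟨rfl, rfl⟩ := Prod.mk.inj hdc
          exact hvdc.asymm hv
        · exact (hflip d c hudc hdc).asymm hwcd
      refine ⟨⟨hucd, hvdc⟩, fun hcd' => ?_⟩
      obtain ⟨rfl, rfl⟩ := Prod.mk.inj hcd'
      exact hba.asymm hwcd
    · rintro ⟨⟨hucd, hvdc⟩, hne⟩
      exact ⟨hflip c d hucd hne, hvdc⟩
  rw [kendall, kendall, hdisc]
  exact Set.ncard_sdiff_singleton_add_one ⟨hab, hv⟩

end Flip

end Kendall

lemma exists_equiv_fin_lt_iff {C α : Type*} [Fintype C] [LinearOrder α] {f : C → α}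
    (hf : Function.Injective f) :
    ∃ σ : C ≃ Fin (Fintype.card C), ∀ a b, σ a < σ b ↔ f a < f b := by
  let : LinearOrder C := LinearOrder.lift' f hf
  exact ⟨(Fintype.orderIsoFinOfCardEq C rfl).symm.toEquiv,
    fun _ _ => (Fintype.orderIsoFinOfCardEq C rfl).symm.lt_iff_lt⟩

section SqDistDiff

variable {E : Type*}

def sqDistDiff [PseudoMetricSpace E] (P Q x : E) : ℝ := dist x P ^ 2 - dist x Q ^ 2

section PseudoMetricSpace

variable [PseudoMetricSpace E] {P Q x : E}

lemma sqDistDiff_neg_iff : sqDistDiff P Q x < 0 ↔ dist x P < dist x Q := by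
  rw [sqDistDiff, sub_neg, sq_lt_sq₀ dist_nonneg dist_nonneg]

lemma sqDistDiff_pos_iff : 0 < sqDistDiff P Q x ↔ dist x Q < dist x P := by
  rw [sqDistDiff, sub_pos, sq_lt_sq₀ dist_nonneg dist_nonneg]

end PseudoMetricSpace

variable [NormedAddCommGroup E] [InnerProductSpace ℝ E]

lemma sqDistDiff_eq_inner (P Q x : E) :
    sqDistDiff P Q x = 2 * ⟪x, Q - P⟫ + ‖P‖ ^ 2 - ‖Q‖ ^ 2 := by
  simp only [sqDistDiff, dist_eq_norm, @norm_sub_sq_real E, inner_sub_right]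
  ring

lemma sqDistDiff_segment (P Q p q : E) (t : ℝ) :
    sqDistDiff P Q (p + t • (q - p)) = (1 - t) * sqDistDiff P Q p + t * sqDistDiff P Q q := by
  simp only [sqDistDiff_eq_inner, inner_add_left, real_inner_smul_left, inner_sub_left]
  ring

lemma eq_zero_of_inner_eq_zero_of_finrank_eq_two (hE : finrank ℝ E = 2) {v₁ v₂ w : E}
    (hv₁ : v₁ ≠ 0) (hv₂ : ∀ r : ℝ, v₂ ≠ r • v₁) (h₁ : ⟪w, v₁⟫ = 0) (h₂ : ⟪w, v₂⟫ = 0) :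
    w = 0 := by
  have : FiniteDimensional ℝ E := Module.finite_of_finrank_eq_succ hE
  by_contra hw
  have hK : finrank ℝ (ℝ ∙ w)ᗮ = 1 := by
    have := Submodule.finrank_add_finrank_orthogonal (ℝ ∙ w)
    rw [finrank_span_singleton hw, hE] at this
    omega
  have hspan : (ℝ ∙ v₁) = (ℝ ∙ w)ᗮ :=
    Submodule.eq_of_le_of_finrank_le
      ((Submodule.span_singleton_le_iff_mem _ _).2
        (Submodule.mem_orthogonal_singleton_iff_inner_right.2 h₁))
      (by rw [hK, finrank_span_singleton hv₁])
  obtain ⟨r, hr⟩ := Submodule.mem_span_singleton.1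
    (hspan ▸ Submodule.mem_orthogonal_singleton_iff_inner_right.2 h₂ : v₂ ∈ ℝ ∙ v₁)
  exact hv₂ r hr.symm

lemma subsingleton_sqDistDiff_eq_zero (hE : finrank ℝ E = 2) {P Q P' Q' : E} (hPQ : P ≠ Q)
    (hpar : ∀ r : ℝ, P' - Q' ≠ r • (P - Q)) :
    {x | sqDistDiff P Q x = 0 ∧ sqDistDiff P' Q' x = 0}.Subsingleton := by
  intro x hx y hy
  have horth : ∀ {A B : E}, sqDistDiff A B x = 0 → sqDistDiff A B y = 0 → ⟪x - y, B - A⟫ = 0 :=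
    fun hx hy => by
      have := congrArg₂ (· - ·) hx hy
      simp only [sqDistDiff_eq_inner, sub_zero] at this
      rw [inner_sub_left]
      linarith
  refine sub_eq_zero.1 (eq_zero_of_inner_eq_zero_of_finrank_eq_two hE (sub_ne_zero.2 hPQ.symm)
    (fun r h => hpar r ?_) (horth hx.1 hy.1) (horth hx.2 hy.2))
  rw [← neg_sub, h, ← smul_neg, neg_sub]

end SqDistDiff

lemma exists_mem_forall_segment_notMem {E : Type*} [NormedAddCommGroup E] [NormedSpace ℝ E]
    [FiniteDimensional ℝ E] [MeasurableSpace E] [BorelSpace E] (hE : 2 ≤ finrank ℝ E)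
    {U S : Set E} (hU : IsOpen U) (hUne : U.Nonempty) (hS : S.Countable) {p : E} (hp : p ∉ S) :
    ∃ q ∈ U, ∀ t : ℝ, p + t • (q - p) ∉ S := by
  let μ : Measure E := Measure.addHaar
  have hline : ∀ s, μ (line[ℝ, p, s]) = 0 := fun s =>
    Measure.addHaar_affineSubspace μ _ fun htop => by
      have h1 := collinear_iff_finrank_le_one.1 (collinear_pair ℝ p s)
      rw [← direction_affineSpan, htop, AffineSubspace.direction_top, finrank_top] at h1
      omega
  have hnull : μ (⋃ s ∈ S, (line[ℝ, p, s] : Set E)) = 0 :=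
    (measure_biUnion_null_iff hS).2 fun s _ => hline s
  obtain ⟨q, hqU, hq⟩ := Set.not_subset.1 fun hsub =>
    (hU.measure_pos μ hUne).ne' (measure_mono_null hsub hnull)
  refine ⟨q, hqU, fun t hts => hq (Set.mem_biUnion hts ?_)⟩
  have ht : t ≠ 0 := by
    rintro rfl
    simp only [zero_smul, add_zero] at hts
    exact hp hts
  have hq_eq : AffineMap.lineMap p (p + t • (q - p)) t⁻¹ = q := by
    rw [AffineMap.lineMap_apply, vsub_eq_sub, vadd_eq_add, add_sub_cancel_left, smul_smul,
      inv_mul_cancel₀ ht, one_smul, sub_add_cancel]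
  have hmem := AffineMap.lineMap_mem_affineSpan_pair t⁻¹ p (p + t • (q - p))
  rwa [hq_eq] at hmem

lemma exists_first_sign_change {ι : Type*} [Finite ι] {A B : ι → ℝ} (hA : ∀ i, A i < 0)
    (hB : ∀ i, B i ≠ 0) (hpos : ∃ i, 0 < B i)
    (hgen : ∀ i j, i ≠ j → ∀ t : ℝ, (1 - t) * A i + t * B i = 0 → (1 - t) * A j + t * B j ≠ 0) :
    ∃ i, 0 < B i ∧ ∃ t : ℝ, 0 < (1 - t) * A i + t * B i ∧
      ∀ j ≠ i, (1 - t) * A j + t * B j < 0 := by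
  set g : ι → ℝ → ℝ := fun i t => (1 - t) * A i + t * B i with hg_def
  -- `τ i` is the zero of `g i`; the sign change that comes first is the one we want
  set τ : ι → ℝ := fun i => A i / (A i - B i) with hτ_def
  have hg : ∀ i, 0 < B i → ∀ t, g i t = (B i - A i) * (t - τ i) := fun i hi t => by
    have : A i - B i ≠ 0 := by linarith [hA i]
    simp only [hg_def, hτ_def]
    field_simp
    ring
  obtain ⟨i, hi : 0 < B i, hmin⟩ := Set.exists_min_image {i | 0 < B i} τ (Set.toFinite _) hpos
  have hAi := hA i
  have hτi : 0 < τ i ∧ τ i < 1 :=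
    ⟨div_pos_of_neg_of_neg hAi (by linarith), (div_lt_one_of_neg (by linarith)).2 (by linarith)⟩
  have hneg : ∀ j ≠ i, g j (τ i) < 0 := by
    intro j hj
    have hne : g j (τ i) ≠ 0 := hgen i j hj.symm _ (by show g i (τ i) = 0; rw [hg i hi]; ring)
    rcases (hB j).lt_or_gt with hBj | hBj
    · have := hA j
      simp only [hg_def]
      nlinarith
    · refine lt_of_le_of_ne ?_ hne
      rw [hg j hBj]
      exact mul_nonpos_of_nonneg_of_nonpos (by linarith [hA j]) (by linarith [hmin j hBj])
  have hev : ∀ᶠ t in 𝓝[>] τ i, 0 < g i t ∧ ∀ j ≠ i, g j t < 0 := by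
    refine (eventually_mem_nhdsWithin.mono fun t ht => ?_).and
      (eventually_all.2 fun j => ?_)
    · rw [hg i hi]
      exact mul_pos (by linarith) (sub_pos.2 ht)
    · by_cases hj : j = i
      · exact Eventually.of_forall fun _ h => absurd hj h
      · have hcont : Continuous (g j) := by simp only [hg_def]; fun_prop
        exact ((hcont.tendsto _).eventually (gt_mem_nhds (hneg j hj))).filter_mono
          nhdsWithin_le_nhds |>.mono fun _ h _ => h
  obtain ⟨t, ht⟩ := hev.exists
  exact ⟨i, hi, t, ht⟩

section Region

variable {C : Type*} {m : ℕ} {γ : C → Plane} {σ : C ≃ Fin m} {z : Plane}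

lemma isOpen_region [Finite C] (γ : C → Plane) (σ : C ≃ Fin m) : IsOpen (region γ σ) := by
  simp only [region, Set.ofPred_forall]
  exact isOpen_iInter_of_finite fun a => isOpen_iInter_of_finite fun b =>
    isOpen_iInter_of_finite fun _ => isOpen_lt (by fun_prop) (by fun_prop)

lemma lt_iff_of_mem_region (hz : z ∈ region γ σ) (a b : C) :
    σ a < σ b ↔ dist z (γ a) < dist z (γ b) := by
  refine ⟨hz a b, fun h => ?_⟩
  rcases lt_trichotomy (σ a) (σ b) with hlt | heq | hgt
  · exact hlt
  · rw [σ.injective heq] at h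
    exact absurd h (lt_irrefl _)
  · exact absurd (hz b a hgt) h.asymm

lemma sqDistDiff_ne_zero_of_mem_region (hz : z ∈ region γ σ) {a b : C} (hab : a ≠ b) :
    sqDistDiff (γ a) (γ b) z ≠ 0 := by
  rcases (σ.injective.ne hab).lt_or_gt with h | h
  · exact (sqDistDiff_neg_iff.2 (hz a b h)).ne
  · exact (sqDistDiff_pos_iff.2 (hz b a h)).ne'

end Region

section Crossings

variable {C : Type*} {γ : C → Plane}

def NoParallelBisectors (γ : C → Plane) : Prop :=
  ∀ a b c d : C, a ≠ b → c ≠ d → ({a, b} : Set C) ≠ ({c, d} : Set C) →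
    ∀ r : ℝ, γ c - γ d ≠ r • (γ a - γ b)

def bisectorCrossings (γ : C → Plane) : Set Plane :=
  {z | ∃ a b c d : C, a ≠ b ∧ c ≠ d ∧ ({a, b} : Set C) ≠ ({c, d} : Set C) ∧
    sqDistDiff (γ a) (γ b) z = 0 ∧ sqDistDiff (γ c) (γ d) z = 0}

lemma NoParallelBisectors.countable_bisectorCrossings [Finite C] (hγ : NoParallelBisectors γ) :
    (bisectorCrossings γ).Countable := by
  simp only [bisectorCrossings, Set.ofPred_exists]
  refine Set.countable_iUnion fun a => Set.countable_iUnion fun b => Set.countable_iUnion fun c =>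
    Set.countable_iUnion fun d => Set.Subsingleton.countable ?_
  rintro x ⟨hab, hcd, hne, hx⟩ y ⟨-, -, -, hy⟩
  -- the case `r = 0` of non-parallelism, with the two pairs exchanged
  have hγab : γ a ≠ γ b := sub_ne_zero.1 (by simpa using hγ c d a b hcd hab hne.symm 0)
  exact subsingleton_sqDistDiff_eq_zero finrank_euclideanSpace_fin hγab (hγ a b c d hab hcd hne)
    hx hy

lemma notMem_bisectorCrossings_of_mem_region {m : ℕ} {σ : C ≃ Fin m} {z : Plane}
    (hz : z ∈ region γ σ) : z ∉ bisectorCrossings γ :=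
  fun ⟨_, _, _, _, hab, _, _, h, _⟩ => sqDistDiff_ne_zero_of_mem_region hz hab h

end Crossings

section Step

variable {C : Type*} {γ : C → Plane}

lemma exists_point_past_first_bisector [Finite C] {m : ℕ} {u v : C ≃ Fin m} {p q : Plane}
    (hp : p ∈ region γ u) (hq : q ∈ region γ v)
    (hgen : ∀ t : ℝ, p + t • (q - p) ∉ bisectorCrossings γ)
    (hdisc : ∃ a b, u a < u b ∧ v b < v a) :
    ∃ z a b, u a < u b ∧ v b < v a ∧ dist z (γ b) < dist z (γ a) ∧
      ∀ c d, u c < u d → (c, d) ≠ (a, b) → dist z (γ c) < dist z (γ d) := by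
  have hne_of_lt : ∀ {c d : C}, u c < u d → c ≠ d := fun h hcd => h.ne (congrArg u hcd)
  have hpair_ne : ∀ i j : {i : C × C // u i.1 < u i.2}, i ≠ j →
      ({i.1.1, i.1.2} : Set C) ≠ {j.1.1, j.1.2} := by
    rintro ⟨⟨c, d⟩, hcd⟩ ⟨⟨c', d'⟩, hcd'⟩ hij hpair
    rcases Set.pair_eq_pair_iff.1 hpair with ⟨rfl, rfl⟩ | ⟨rfl, rfl⟩
    · exact hij rfl
    · exact hcd.asymm hcd'
  obtain ⟨⟨⟨a, b⟩, hab⟩, hqab, t, hzab, hz⟩ :=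
    exists_first_sign_change (ι := {i : C × C // u i.1 < u i.2})
      (A := fun i => sqDistDiff (γ i.1.1) (γ i.1.2) p)
      (B := fun i => sqDistDiff (γ i.1.1) (γ i.1.2) q)
      (fun i => sqDistDiff_neg_iff.2 (hp _ _ i.2))
      (fun i => sqDistDiff_ne_zero_of_mem_region hq (hne_of_lt i.2))
      (let ⟨a, b, hab, hba⟩ := hdisc; ⟨⟨(a, b), hab⟩, sqDistDiff_pos_iff.2 (hq b a hba)⟩)
      (fun i j hij t hi hj => hgen t ⟨_, _, _, _, hne_of_lt i.2, hne_of_lt j.2, hpair_ne i j hij,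
        (sqDistDiff_segment ..).trans hi, (sqDistDiff_segment ..).trans hj⟩)
  refine ⟨p + t • (q - p), a, b, hab, (lt_iff_of_mem_region hq b a).2 (sqDistDiff_pos_iff.1 hqab),
    sqDistDiff_pos_iff.1 ((sqDistDiff_segment ..).trans_gt hzab), fun c d hcd hne => ?_⟩
  refine sqDistDiff_neg_iff.1 ((sqDistDiff_segment ..).trans_lt (hz ⟨(c, d), hcd⟩ ?_))
  exact fun h => hne (congrArg Subtype.val h)

lemma exists_kendall_eq_one_of_ne [Fintype C] (hγ : NoParallelBisectors γ)
    {u v : C ≃ Fin (Fintype.card C)} (hu : (region γ u).Nonempty) (hv : (region γ v).Nonempty)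
    (huv : u ≠ v) :
    ∃ w, (region γ w).Nonempty ∧ kendall u w = 1 ∧ kendall w v + 1 = kendall u v := by
  obtain ⟨p, hp⟩ := hu
  obtain ⟨q, hq, hgen⟩ := exists_mem_forall_segment_notMem finrank_euclideanSpace_fin.ge
    (isOpen_region γ v) hv hγ.countable_bisectorCrossings (notMem_bisectorCrossings_of_mem_region hp)
  have hdisc : ∃ a b, u a < u b ∧ v b < v a := by
    have hpos : kendall u v ≠ 0 := fun h => huv (eq_of_kendall_eq_zero h)
    obtain ⟨⟨a, b⟩, hab⟩ := Set.nonempty_of_ncard_ne_zero hpos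
    exact ⟨a, b, hab⟩
  obtain ⟨z, a, b, hab, hba, hzba, hz⟩ := exists_point_past_first_bisector hp hq hgen hdisc
  have hinj : Function.Injective fun c => dist z (γ c) := by
    have hne : ∀ c d, u c < u d → dist z (γ c) ≠ dist z (γ d) := fun c d hcd => by
      by_cases h : (c, d) = (a, b)
      · obtain ⟨rfl, rfl⟩ := Prod.mk.inj h
        exact hzba.ne'
      · exact (hz c d hcd h).ne
    intro c d hcd
    by_contra hne'
    rcases (u.injective.ne hne').lt_or_gt with h | h
    · exact hne c d h hcd
    · exact hne d c h hcd.symm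
  obtain ⟨w, hw⟩ := exists_equiv_fin_lt_iff hinj
  have hwba : w b < w a := (hw b a).2 hzba
  have hflip : ∀ c d, u c < u d → (c, d) ≠ (a, b) → w c < w d :=
    fun c d hcd hne => (hw c d).2 (hz c d hcd hne)
  exact ⟨w, ⟨z, fun c d => (hw c d).1⟩, kendall_eq_one_of_flip hab hwba hflip,
    kendall_add_one_of_flip hab hwba hflip hba⟩

end Step

section Walks

variable {C : Type*} [Fintype C] {γ : C → Plane}

lemma kendall_le_length {u v : {σ : C ≃ Fin (Fintype.card C) // (region γ σ).Nonempty}}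
    (W : (embeddingGraph γ).Walk u v) : kendall u.1 v.1 ≤ W.length := by
  induction W with
  | nil => simp [kendall_self]
  | @cons x y z hxy W ih =>
    have hxy : kendall x.1 y.1 = 1 := by
      rcases hxy.2 with h | h
      · exact h
      · rwa [kendall_comm]
    have := kendall_le_kendall_add_kendall x.1 y.1 z.1
    rw [SimpleGraph.Walk.length_cons]
    omega

lemma exists_walk_length_eq_kendall (hγ : NoParallelBisectors γ)
    (u v : {σ : C ≃ Fin (Fintype.card C) // (region γ σ).Nonempty}) :
    ∃ W : (embeddingGraph γ).Walk u v, W.length = kendall u.1 v.1 := by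
  suffices ∀ n (u : {σ : C ≃ Fin (Fintype.card C) // (region γ σ).Nonempty}),
      kendall u.1 v.1 = n → ∃ W : (embeddingGraph γ).Walk u v, W.length = n from this _ u rfl
  intro n
  induction n with
  | zero =>
    intro u hu
    obtain rfl : u = v := Subtype.ext (eq_of_kendall_eq_zero hu)
    exact ⟨.nil, rfl⟩
  | succ n ih =>
    intro u hu
    have huv : u.1 ≠ v.1 := fun h => by simp [h, kendall_self] at hu
    obtain ⟨w, hw, huw, hwv⟩ := exists_kendall_eq_one_of_ne hγ u.2 v.2 huv
    obtain ⟨W, hW⟩ := ih ⟨w, hw⟩ (by dsimp only; omega)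
    have hadj : (embeddingGraph γ).Adj u ⟨w, hw⟩ :=
      ⟨fun h => by rw [h, kendall_self] at huw; exact zero_ne_one huw, Or.inl huw⟩
    exact ⟨.cons hadj W, by simp [hW]⟩

end Walks

theorem stmt_11_general {C : Type*} [Fintype C] (γ : C → Plane)
    (hnopar : ∀ a b c d : C, a ≠ b → c ≠ d → ({a, b} : Set C) ≠ ({c, d} : Set C) →
      ∀ r : ℝ, γ c - γ d ≠ r • (γ a - γ b))
    (u v : {σ : C ≃ Fin (Fintype.card C) // (region γ σ).Nonempty}) :
    (embeddingGraph γ).dist u v = kendall u.1 v.1 := by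
  obtain ⟨W, hW⟩ := exists_walk_length_eq_kendall hnopar u v
  obtain ⟨P, hP⟩ := SimpleGraph.Reachable.exists_walk_length_eq_dist ⟨W⟩
  exact le_antisymm (hW ▸ SimpleGraph.dist_le W) (hP ▸ kendall_le_length P)

/-- for a nice embedding of candidates (no two bisectors parallel), the
embedding graph is a distance-preserving subgraph of the permutation graph: the graph
distance between any two of its vertices equals their swap distance. -/
theorem stmt_11 {C : Type*} [Fintype C] (γ : C → Plane) (hγ : Function.Injective γ)
    (hnopar : ∀ a b c d : C, a ≠ b → c ≠ d → ({a, b} : Set C) ≠ ({c, d} : Set C) →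
      ∀ r : ℝ, γ c - γ d ≠ r • (γ a - γ b))
    (u v : {σ : C ≃ Fin (Fintype.card C) // (region γ σ).Nonempty}) :
    (embeddingGraph γ).dist u v = kendall u.1 v.1 :=
  stmt_11_general γ hnopar u v
end
end

section
/- Let γ : C → ℝ² be an injective embedding of a finite candidate set. For every candidate c ∈ C, there exists a linear order v on C ranking c first such that the region R_γ(v) is nonempty. -/
noncomputable section

/-! Rank the candidates by their distance to a point `p` of the Voronoi cell of `c` at which no two
candidates are equidistant. Such a `p` exists: the cell is open and contains `γ c`, while the
points with a tie lie on finitely many perpendicular bisectors, which are proper affine subspaces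
and hence closed with empty interior. -/

open Set Function

theorem AffineSubspace.interior_eq_empty_of_ne_top {V P : Type*} [NormedAddCommGroup V]
    [NormedSpace ℝ V] [MetricSpace P] [NormedAddTorsor V P] {s : AffineSubspace ℝ P}
    (hs : s ≠ ⊤) : interior (s : Set P) = ∅ := by
  by_contra h
  refine hs (top_unique ?_)
  calc ⊤ = affineSpan ℝ (interior (s : Set P)) :=
        (isOpen_interior.affineSpan_eq_top (nonempty_iff_ne_empty.2 h)).symm
    _ ≤ affineSpan ℝ s := affineSpan_mono ℝ interior_subset
    _ = s := AffineSubspace.affineSpan_coe s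

section InnerProductSpace

variable {V : Type*} [NormedAddCommGroup V] [InnerProductSpace ℝ V]

theorem dense_setOf_dist_ne_dist {x y : V} (hxy : x ≠ y) :
    Dense {p : V | dist p x ≠ dist p y} := by
  have hcompl : {p : V | dist p x ≠ dist p y} = (AffineSubspace.perpBisector x y : Set V)ᶜ := by
    ext p
    simp [AffineSubspace.mem_perpBisector_iff_dist_eq]
  rw [hcompl, ← interior_eq_empty_iff_dense_compl]
  exact AffineSubspace.interior_eq_empty_of_ne_top (AffineSubspace.perpBisector_eq_top.not.2 hxy)

theorem dense_setOf_injective_dist {C : Type*} [Finite C] {γ : C → V} (hγ : Injective γ) :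
    Dense {p : V | Injective fun a => dist p (γ a)} := by
  have hinter : {p : V | Injective fun a => dist p (γ a)} =
      ⋂ ab : {ab : C × C // ab.1 ≠ ab.2}, {p | dist p (γ ab.1.1) ≠ dist p (γ ab.1.2)} := by
    ext p
    simp [Injective, not_imp_not]
  rw [hinter, ← sInter_range]
  refine (finite_range _).dense_sInter (forall_mem_range.2 fun ab => ?_)
    (forall_mem_range.2 fun ab => dense_setOf_dist_ne_dist (hγ.ne ab.2))
  exact isOpen_ne_fun (continuous_id.dist continuous_const) (continuous_id.dist continuous_const)

end InnerProductSpace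

section Voronoi

variable {C P : Type*} [MetricSpace P]

def voronoiCell (γ : C → P) (c : C) : Set P :=
  {p | ∀ d, d ≠ c → dist p (γ c) < dist p (γ d)}

theorem isOpen_voronoiCell [Finite C] (γ : C → P) (c : C) : IsOpen (voronoiCell γ c) := by
  simp only [voronoiCell, ofPred_forall]
  exact isOpen_iInter_of_finite fun d => isOpen_iInter_of_finite fun _ =>
    isOpen_lt (continuous_id.dist continuous_const) (continuous_id.dist continuous_const)

theorem self_mem_voronoiCell {γ : C → P} (hγ : Injective γ) (c : C) : γ c ∈ voronoiCell γ c :=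
  fun d hd => by simpa using hγ.ne hd.symm

end Voronoi

theorem exists_equiv_fin_lt_iff_lt {C β : Type*} [Fintype C] [LinearOrder β] {f : C → β}
    (hf : Injective f) : ∃ σ : C ≃ Fin (Fintype.card C), ∀ a b, σ a < σ b ↔ f a < f b := by
  -- in the order lifted along `f`, `a < b` is definitionally `f a < f b`
  let : LinearOrder C := LinearOrder.lift' f hf
  exact ⟨(monoEquivOfFin C rfl).symm.toEquiv, fun a b => (monoEquivOfFin C rfl).symm.lt_iff_lt⟩

/-- for any injective embedding of the candidates and any candidate `c`,
there is a linear order ranking `c` first whose region is nonempty. -/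
theorem stmt_13 {C : Type*} [Fintype C] (γ : C → Plane) (hγ : Function.Injective γ)
    (c : C) :
    ∃ σ : C ≃ Fin (Fintype.card C),
      (∀ d : C, d ≠ c → σ c < σ d) ∧ (region γ σ).Nonempty := by
  obtain ⟨p, hp_generic, hp_cell⟩ := (dense_setOf_injective_dist hγ).exists_mem_open
    (isOpen_voronoiCell γ c) ⟨γ c, self_mem_voronoiCell hγ c⟩
  obtain ⟨σ, hσ⟩ := exists_equiv_fin_lt_iff_lt hp_generic
  exact ⟨σ, fun d hd => (hσ c d).2 (hp_cell d hd), p, fun a b hab => (hσ a b).1 hab⟩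
end
end
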